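/- arXiv:2011.00817 — 7 statements merged into one kernel-verified Lean document; each statement's English description precedes it below -/
import Mathlib

section
/- Let M ≥ 1 and let J be a finite set of jobs with processing times p(i,j) ≥ 0 for each machine i ∈ {1,…,M} and job j ∈ J. Let q ≥ 1 be a real number, ℓ ≥ 1 an integer, and R, B, T ≥ 0 reals. Suppose x : {1,…,M} × J → [0,1] satisfies: (i) Σ_{i=1}^{M} x_{ij} = 1 for every j ∈ J; (ii) x_{ij} = 0 whenever p(i,j) > R; (iii) Σ_{j : p(i,j) ≥ T} x_{ij} ≤ ℓ for every i; (iv) Σ_{j : p(i,j) ≥ T} x_{ij}·p(i,j)^q ≤ B^q for every i. Then there exists an assignment σ : J → {1,…,M} such that p(σ(j), j) ≤ R for every j ∈ J, and for every machine i and every subset T' ⊆ σ^{-1}(i) with |T'| ≤ ℓ one has Σ_{j ∈ T'} p(i,j)^q ≤ 2R^q + B^q + ℓ·T^q; equivalently, the Top_ℓ^{(q)} value of the vector of job sizes assigned to each machine is at most (2R^q + B^q + ℓ·T^q)^{1/q}. -/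
/-!
Iterative rounding in the style of Shmoys and Tardos, with weight `w i j = p i j ^ q` for the
jobs with `T ≤ p i j` and `0` for the others. While some entry of `x` is fractional there is a
nonzero direction, supported on the fractional entries, that keeps every job's total and the
weighted load of every machine with at least three fractional jobs: these constraints are fewer
than the fractional entries, because a fractional job is fractional on at least two machines.
Moving along it until an entry reaches `0` strictly decreases the number of fractional entries.
Once a machine has at most two fractional jobs it may receive all of them, which costs at most
`2 R ^ q` beyond its LP load of weight, itself at most `B ^ q`; and a set of at most `ℓ` jobs
adds at most `ℓ T ^ q` for its jobs below `T`.
-/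

open Finset Module

theorem mul_card_filter_le_sum {ι : Type*} (s : Finset ι) (f : ι → ℕ) (k : ℕ) :
    k * #(s.filter (k ≤ f ·)) ≤ ∑ i ∈ s, f i :=
  calc k * #(s.filter (k ≤ f ·)) = #(s.filter (k ≤ f ·)) • k := by rw [smul_eq_mul, mul_comm]
    _ ≤ ∑ i ∈ s.filter (k ≤ f ·), f i := card_nsmul_le_sum _ _ _ fun i hi => (mem_filter.1 hi).2
    _ ≤ ∑ i ∈ s, f i := sum_le_sum_of_subset (filter_subset _ _)

section Product

variable {α β : Type*} [Fintype α] [Fintype β]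

theorem card_filter_prod_eq_sum_left (P : α × β → Prop) [DecidablePred P] :
    #(univ.filter P) = ∑ a, #(univ.filter fun b => P (a, b)) := by
  simp only [card_filter]
  exact Fintype.sum_prod_type _

theorem card_filter_prod_eq_sum_right (P : α × β → Prop) [DecidablePred P] :
    #(univ.filter P) = ∑ b, #(univ.filter fun a => P (a, b)) := by
  simp only [card_filter]
  exact Fintype.sum_prod_type_right _

theorem exists_ne_zero_vanishing_of_card_lt (w : α → β → ℝ) (F : Finset (α × β))
    (A : Finset β) (B : Finset α) (h : #A + #B < #F) :
    ∃ D : α × β → ℝ, D ≠ 0 ∧ (∀ e ∉ F, D e = 0) ∧ (∀ b ∈ A, ∑ a, D (a, b) = 0) ∧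
      ∀ a ∈ B, ∑ b, w a b * D (a, b) = 0 := by
  classical
  let Φ : (α × β → ℝ) →ₗ[ℝ] (↥Fᶜ → ℝ) × (↥A → ℝ) × (↥B → ℝ) :=
    { toFun := fun D => (fun e => D e, fun b => ∑ a, D (a, b), fun a => ∑ b, w a b * D (a, b))
      map_add' := fun D D' => by ext <;> simp [sum_add_distrib, mul_add]
      map_smul' := fun c D => by ext <;> simp [mul_sum, mul_left_comm] }
  have hrank : finrank ℝ ((↥Fᶜ → ℝ) × (↥A → ℝ) × (↥B → ℝ)) < finrank ℝ (α × β → ℝ) := by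
    simp only [finrank_prod, finrank_fintype_fun_eq_card, Fintype.card_coe, card_compl]
    have := F.card_le_univ
    omega
  obtain ⟨D, hD, hD0⟩ :=
    Submodule.exists_mem_ne_zero_of_ne_bot (LinearMap.ker_ne_bot_of_finrank_lt hrank)
  have hΦ : Φ D = 0 := hD
  exact ⟨D, hD0, fun e he => congrFun (congrArg Prod.fst hΦ) ⟨e, mem_compl.2 he⟩,
    fun b hb => congrFun (congrArg (Prod.fst ∘ Prod.snd) hΦ) ⟨b, hb⟩,
    fun a ha => congrFun (congrArg (Prod.snd ∘ Prod.snd) hΦ) ⟨a, ha⟩⟩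

theorem exists_neg_of_sum_fst_eq_zero (D : α × β → ℝ) (hD : D ≠ 0)
    (hsum : ∀ b, ∑ a, D (a, b) = 0) : ∃ e, D e < 0 := by
  by_contra! h
  refine hD (funext fun e => ?_)
  exact (sum_eq_zero_iff_of_nonneg fun a _ => h (a, e.2)).1 (hsum e.2) e.1 (mem_univ _)

end Product

theorem exists_add_mul_nonneg_eq_zero {ι : Type*} [Fintype ι] (x D : ι → ℝ)
    (hx : ∀ e, 0 ≤ x e) (hD : ∃ e, D e < 0) :
    ∃ t : ℝ, (∀ e, 0 ≤ x e + t * D e) ∧ ∃ e, D e < 0 ∧ x e + t * D e = 0 := by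
  obtain ⟨e₀, he₀, hmin⟩ := (univ.filter (D · < 0)).exists_min_image (fun e => x e / -D e)
    (by simpa [filter_nonempty_iff] using hD)
  simp only [mem_filter, mem_univ, true_and] at he₀ hmin
  have ht : 0 ≤ x e₀ / -D e₀ := div_nonneg (hx e₀) (by linarith)
  refine ⟨x e₀ / -D e₀, fun e => ?_, e₀, he₀, by field_simp [he₀.ne]; ring⟩
  rcases lt_or_ge (D e) 0 with hneg | hnonneg
  · have := (le_div_iff₀ (neg_pos.2 hneg)).1 (hmin e hneg)
    linarith
  · nlinarith [hx e]

theorem sum_pos_le_sum_mul_add_card_mul {ι : Type*} [Fintype ι] (a v : ι → ℝ) (r : ℝ)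
    (ha0 : ∀ j, 0 ≤ a j) (ha1 : ∀ j, a j ≤ 1) (hv : ∀ j, 0 ≤ v j) (hvr : ∀ j, 0 < a j → v j ≤ r) :
    ∑ j ∈ univ.filter (0 < a ·), v j
      ≤ ∑ j, a j * v j + #(univ.filter fun j => 0 < a j ∧ a j < 1) * r := by
  have hsupp : ∑ j ∈ univ.filter (0 < a ·), a j * v j = ∑ j, a j * v j :=
    sum_filter_of_ne fun j _ h => (ha0 j).lt_of_ne' (left_ne_zero_of_mul h)
  have hrest : ∑ j ∈ univ.filter (0 < a ·), (1 - a j) * v j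
      ≤ #(univ.filter fun j => 0 < a j ∧ a j < 1) * r := by
    calc ∑ j ∈ univ.filter (0 < a ·), (1 - a j) * v j
        ≤ ∑ j ∈ univ.filter (0 < a ·), if a j < 1 then r else 0 := by
          refine sum_le_sum fun j hj => ?_
          have hj := (mem_filter.1 hj).2
          split_ifs with h1
          · nlinarith [hv j, hvr j hj]
          · simp [le_antisymm (ha1 j) (not_lt.1 h1)]
      _ = _ := by rw [sum_ite, sum_const_zero, add_zero, sum_const, nsmul_eq_mul, filter_filter]
  calc ∑ j ∈ univ.filter (0 < a ·), v j
      = ∑ j ∈ univ.filter (0 < a ·), a j * v j + ∑ j ∈ univ.filter (0 < a ·), (1 - a j) * v j := by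
        rw [← sum_add_distrib]; exact sum_congr rfl fun j _ => by ring
    _ ≤ _ := by rw [hsupp]; linarith

theorem rpow_le_ite_add_rpow {a T q : ℝ} (ha : 0 ≤ a) (hT : 0 ≤ T) (hq : 0 ≤ q) :
    a ^ q ≤ (if T ≤ a then a ^ q else 0) + T ^ q := by
  split_ifs with h
  · linarith [Real.rpow_nonneg hT q]
  · linarith [Real.rpow_le_rpow ha (not_le.1 h).le hq]

section FractionalAssignment

variable {I J : Type*}

section

variable [Fintype I]

theorem le_one_of_sum_eq_one {x : I → J → ℝ} (hx : ∀ i j, 0 ≤ x i j)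
    (hcol : ∀ j, ∑ i, x i j = 1) (i : I) (j : J) : x i j ≤ 1 :=
  hcol j ▸ single_le_sum (fun i _ => hx i j) (mem_univ i)

theorem one_lt_card_frac_of_frac {x : I → J → ℝ} (hx : ∀ i j, 0 ≤ x i j)
    (hcol : ∀ j, ∑ i, x i j = 1) {i₀ : I} {j : J} (h : 0 < x i₀ j ∧ x i₀ j < 1) :
    1 < #(univ.filter fun i => 0 < x i j ∧ x i j < 1) := by
  classical
  have hrest : ∑ i ∈ univ.erase i₀, x i j = 1 - x i₀ j := by
    rw [← hcol j, ← sum_erase_add _ _ (mem_univ i₀)]; ring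
  obtain ⟨i, hi, hpos⟩ : ∃ i ∈ univ.erase i₀, 0 < x i j := by
    by_contra! h'
    linarith [sum_nonpos h']
  have hlt : x i j < 1 := by
    linarith [single_le_sum (fun i _ => hx i j) hi]
  exact one_lt_card.2 ⟨i, by simp [hpos, hlt], i₀, by simp [h], ne_of_mem_erase hi⟩

end

section

variable [Fintype J] {w : I → J → ℝ} {r : ℝ}

noncomputable def fracDeg (x : I → J → ℝ) (i : I) : ℕ :=
  #(univ.filter fun j => 0 < x i j ∧ x i j < 1)

/-- Bound on the final load of machine `i`: while `i` has three or more fractional jobs its LP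
load is preserved; afterwards it may still receive every job of its support. -/
noncomputable def loadBound (w x : I → J → ℝ) (r : ℝ) (i : I) : ℝ :=
  if fracDeg x i ≤ 2 then ∑ j ∈ univ.filter (0 < x i ·), w i j else ∑ j, x i j * w i j + 2 * r

theorem loadBound_le {x : I → J → ℝ} {i : I} (hw : ∀ j, 0 ≤ w i j) (hr : 0 ≤ r)
    (hx : ∀ j, 0 ≤ x i j) (hx1 : ∀ j, x i j ≤ 1) (hwr : ∀ j, 0 < x i j → w i j ≤ r) :
    loadBound w x r i ≤ ∑ j, x i j * w i j + 2 * r := by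
  unfold loadBound
  split_ifs with hdeg
  · refine (sum_pos_le_sum_mul_add_card_mul (x i) (w i) r hx hx1 hw hwr).trans ?_
    have : (fracDeg x i : ℝ) ≤ 2 := by exact_mod_cast hdeg
    unfold fracDeg at this
    nlinarith
  · exact le_rfl

theorem loadBound_le_of_step {x x' : I → J → ℝ} {i : I} (hw : ∀ j, 0 ≤ w i j) (hr : 0 ≤ r)
    (hx' : ∀ j, 0 ≤ x' i j) (hx'1 : ∀ j, x' i j ≤ 1) (hwr : ∀ j, 0 < x' i j → w i j ≤ r)
    (hpos : ∀ j, 0 < x' i j → 0 < x i j)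
    (hfrac : ∀ j, 0 < x' i j ∧ x' i j < 1 → 0 < x i j ∧ x i j < 1)
    (hload : 3 ≤ fracDeg x i → ∑ j, x' i j * w i j = ∑ j, x i j * w i j) :
    loadBound w x' r i ≤ loadBound w x r i := by
  by_cases h : fracDeg x i ≤ 2
  · have hdeg : fracDeg x' i ≤ 2 :=
      (card_le_card (monotone_filter_right _ fun j _ => hfrac j)).trans h
    rw [loadBound, loadBound, if_pos hdeg, if_pos h]
    exact sum_le_sum_of_subset_of_nonneg (monotone_filter_right _ fun j _ => hpos j)
      fun j _ _ => hw j
  · calc loadBound w x' r i ≤ ∑ j, x' i j * w i j + 2 * r := loadBound_le hw hr hx' hx'1 hwr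
      _ = loadBound w x r i := by rw [hload (by omega), loadBound, if_neg h]

end

variable [Fintype I] [Fintype J]

noncomputable def fracSet (x : I → J → ℝ) : Finset (I × J) :=
  univ.filter fun e => 0 < x e.1 e.2 ∧ x e.1 e.2 < 1

theorem card_fracSet_eq_sum_fracDeg (x : I → J → ℝ) : #(fracSet x) = ∑ i, fracDeg x i :=
  card_filter_prod_eq_sum_left _

theorem card_add_card_lt_card_fracSet {x : I → J → ℝ} (hF : (fracSet x).Nonempty) :
    #(univ.filter fun j => 2 ≤ #(univ.filter fun i => 0 < x i j ∧ x i j < 1))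
      + #(univ.filter fun i => 3 ≤ fracDeg x i) < #(fracSet x) := by
  have hjobs :=
    mul_card_filter_le_sum univ (fun j => #(univ.filter fun i => 0 < x i j ∧ x i j < 1)) 2
  have hmachines := mul_card_filter_le_sum univ (fracDeg x) 3
  have hcols : #(fracSet x) = ∑ j, #(univ.filter fun i => 0 < x i j ∧ x i j < 1) :=
    card_filter_prod_eq_sum_right _
  have := hF.card_pos
  rw [← card_fracSet_eq_sum_fracDeg] at hmachines
  omega

theorem exists_rounding_step (w : I → J → ℝ) {x : I → J → ℝ} (hx : ∀ i j, 0 ≤ x i j)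
    (hcol : ∀ j, ∑ i, x i j = 1) (hF : (fracSet x).Nonempty) :
    ∃ x' : I → J → ℝ, (∀ i j, 0 ≤ x' i j) ∧ (∀ j, ∑ i, x' i j = 1) ∧
      (∀ i j, 0 < x' i j → 0 < x i j) ∧
      (∀ i j, 0 < x' i j ∧ x' i j < 1 → 0 < x i j ∧ x i j < 1) ∧
      (∃ i j, 0 < x i j ∧ x i j < 1 ∧ x' i j = 0) ∧
      ∀ i, 3 ≤ fracDeg x i → ∑ j, x' i j * w i j = ∑ j, x i j * w i j := by
  obtain ⟨D, hD0, hDF, hDcol, hDload⟩ :=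
    exists_ne_zero_vanishing_of_card_lt w (fracSet x) _ _ (card_add_card_lt_card_fracSet hF)
  have hfrac : ∀ e, D e ≠ 0 → 0 < x e.1 e.2 ∧ x e.1 e.2 < 1 := fun e he => by
    simpa [fracSet] using not_imp_comm.1 (hDF e) he
  have hDcol' : ∀ j, ∑ i, D (i, j) = 0 := by
    intro j
    by_cases hj : 2 ≤ #(univ.filter fun i => 0 < x i j ∧ x i j < 1)
    · exact hDcol j (by simpa using hj)
    · refine sum_eq_zero fun i _ => ?_
      by_contra hi
      exact hj (one_lt_card_frac_of_frac hx hcol (hfrac (i, j) hi))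
  have hmove : ∀ i j, D (i, j) = 0 ∨ (0 < x i j ∧ x i j < 1) :=
    fun i j => or_iff_not_imp_left.2 (hfrac (i, j))
  obtain ⟨t, hnonneg, ⟨i₀, j₀⟩, hneg, hzero⟩ := exists_add_mul_nonneg_eq_zero
    (fun e => x e.1 e.2) D (fun e => hx e.1 e.2) (exists_neg_of_sum_fst_eq_zero D hD0 hDcol')
  refine ⟨fun i j => x i j + t * D (i, j), fun i j => hnonneg (i, j), fun j => ?_,
    fun i j h => (hmove i j).elim (fun hD => by simpa [hD] using h) And.left,
    fun i j h => (hmove i j).elim (fun hD => by simpa [hD] using h) id,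
    ⟨i₀, j₀, (hfrac _ hneg.ne).1, (hfrac _ hneg.ne).2, hzero⟩, fun i hi => ?_⟩
  · simp [sum_add_distrib, ← mul_sum, hcol j, hDcol' j]
  · have := hDload i (by simpa using hi)
    simp only [add_mul, sum_add_distrib, add_eq_left]
    simpa [mul_assoc, mul_comm, mul_left_comm, ← mul_sum] using Or.inr this

variable {w : I → J → ℝ} {r : ℝ}

theorem exists_assignment_sum_le_loadBound (hw : ∀ i j, 0 ≤ w i j) (hr : 0 ≤ r)
    (x : I → J → ℝ) (hx : ∀ i j, 0 ≤ x i j) (hcol : ∀ j, ∑ i, x i j = 1)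
    (hwr : ∀ i j, 0 < x i j → w i j ≤ r) :
    ∃ σ : J → I, (∀ j, 0 < x (σ j) j) ∧
      ∀ i (s : Finset J), (∀ j ∈ s, σ j = i) → ∑ j ∈ s, w i j ≤ loadBound w x r i := by
  induction hn : #(fracSet x) using Nat.strong_induction_on generalizing x with
  | _ n ih =>
  rcases (fracSet x).eq_empty_or_nonempty with hF | hF
  · have hdeg : ∀ i, fracDeg x i = 0 := by
      have := card_fracSet_eq_sum_fracDeg x
      rw [hF, card_empty, eq_comm, sum_eq_zero_iff] at this
      simpa using this
    choose σ hσ using fun j => exists_lt_of_sum_lt (s := univ) (f := 0) (g := (x · j))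
      (by simp [hcol j])
    refine ⟨σ, fun j => (hσ j).2, fun i s hs => ?_⟩
    rw [loadBound, if_pos (by simp [hdeg i])]
    refine sum_le_sum_of_subset_of_nonneg (fun j hj => ?_) fun j _ _ => hw i j
    simpa [← hs j hj] using (hσ j).2
  · obtain ⟨x', hx', hcol', hpos, hfrac, ⟨i₀, j₀, hpos₀, hlt₀, hzero⟩, hload⟩ :=
      exists_rounding_step w hx hcol hF
    have hlt : #(fracSet x') < n := hn ▸ card_lt_card ((ssubset_iff_of_subset fun e he => by
      simpa [fracSet] using hfrac e.1 e.2 (by simpa [fracSet] using he)).2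
      ⟨(i₀, j₀), by simp [fracSet, hpos₀, hlt₀], by simp [fracSet, hzero]⟩)
    have hwr' : ∀ i j, 0 < x' i j → w i j ≤ r := fun i j h => hwr i j (hpos i j h)
    obtain ⟨σ, hσ, hσload⟩ := ih _ hlt x' hx' hcol' hwr' rfl
    refine ⟨σ, fun j => hpos _ _ (hσ j), fun i s hs => (hσload i s hs).trans ?_⟩
    exact loadBound_le_of_step (hw i) hr (hx' i) (le_one_of_sum_eq_one hx' hcol' i) (hwr' i)
      (hpos i) (hfrac i) (hload i)

theorem exists_assignment_sum_le_sum_mul_add (hw : ∀ i j, 0 ≤ w i j) (hr : 0 ≤ r)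
    (x : I → J → ℝ) (hx : ∀ i j, 0 ≤ x i j) (hcol : ∀ j, ∑ i, x i j = 1)
    (hwr : ∀ i j, 0 < x i j → w i j ≤ r) :
    ∃ σ : J → I, (∀ j, 0 < x (σ j) j) ∧
      ∀ i (s : Finset J), (∀ j ∈ s, σ j = i) → ∑ j ∈ s, w i j ≤ ∑ j, x i j * w i j + 2 * r := by
  obtain ⟨σ, hσ, hload⟩ := exists_assignment_sum_le_loadBound hw hr x hx hcol hwr
  exact ⟨σ, hσ, fun i s hs => (hload i s hs).trans
    (loadBound_le (hw i) hr (hx i) (le_one_of_sum_eq_one hx hcol i) (hwr i))⟩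

end FractionalAssignment

theorem maxnorm_makespan_topq_rounding_general
    (M : ℕ) (J : Type) [Fintype J]
    (p : Fin M → J → ℝ) (hp : ∀ i j, 0 ≤ p i j)
    (q : ℝ) (hq : 1 ≤ q) (ℓ : ℕ)
    (R B T : ℝ) (hR : 0 ≤ R) (hT : 0 ≤ T)
    (x : Fin M → J → ℝ)
    (hx01 : ∀ i j, x i j ∈ Set.Icc (0 : ℝ) 1)
    (hx1 : ∀ j, ∑ i, x i j = 1)
    (hxR : ∀ i j, R < p i j → x i j = 0)
    (hxB : ∀ i, ∑ j ∈ Finset.univ.filter (fun j => T ≤ p i j),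
        x i j * p i j ^ q ≤ B ^ q) :
    ∃ σ : J → Fin M,
      (∀ j, p (σ j) j ≤ R) ∧
      ∀ i : Fin M, ∀ T' : Finset J, (∀ j ∈ T', σ j = i) → T'.card ≤ ℓ →
        ∑ j ∈ T', p i j ^ q ≤ 2 * R ^ q + B ^ q + (ℓ : ℝ) * T ^ q := by
  have hq0 : 0 ≤ q := by linarith
  let w : Fin M → J → ℝ := fun i j => if T ≤ p i j then p i j ^ q else 0
  have hw : ∀ i j, 0 ≤ w i j := fun i j => by
    dsimp only [w]; split_ifs
    · exact Real.rpow_nonneg (hp i j) q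
    · exact le_rfl
  have hpR : ∀ i j, 0 < x i j → p i j ≤ R := fun i j h => not_lt.1 fun hc => h.ne' (hxR i j hc)
  have hwR : ∀ i j, 0 < x i j → w i j ≤ R ^ q := fun i j h => by
    dsimp only [w]; split_ifs
    · exact Real.rpow_le_rpow (hp i j) (hpR i j h) hq0
    · positivity
  have hLP : ∀ i, ∑ j, x i j * w i j = ∑ j ∈ univ.filter (fun j => T ≤ p i j), x i j * p i j ^ q :=
    fun i => by simp only [w, mul_ite, mul_zero, sum_ite, sum_const_zero, add_zero]
  obtain ⟨σ, hσ, hload⟩ := exists_assignment_sum_le_sum_mul_add hw (Real.rpow_nonneg hR q) x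
    (fun i j => (hx01 i j).1) hx1 hwR
  refine ⟨σ, fun j => hpR _ _ (hσ j), fun i T' hT' hcard => ?_⟩
  calc ∑ j ∈ T', p i j ^ q ≤ ∑ j ∈ T', w i j + #T' * T ^ q := by
        simpa [sum_add_distrib] using
          sum_le_sum fun j (_ : j ∈ T') => rpow_le_ite_add_rpow (hp i j) hT hq0
    _ ≤ (B ^ q + 2 * R ^ q) + ℓ * T ^ q := by
        gcongr
        exact (hload i T' hT').trans (by linarith [hLP i, hxB i])
    _ = 2 * R ^ q + B ^ q + ℓ * T ^ q := by ring

/-- **Rounding guarantee for Top_ℓ^{(q)} Max-Norm Makespan.**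
Given a feasible fractional solution `x` of the LP relaxation `LB(R,B,T)`,
there exists an integral assignment `σ` using only job-machine pairs of size at most `R`,
whose `Top_ℓ^{(q)}` value on each machine is at most `(2R^q + B^q + ℓ·T^q)^{1/q}`. -/
theorem maxnorm_makespan_topq_rounding
    (M : ℕ) (hM : 1 ≤ M) (J : Type) [Fintype J]
    (p : Fin M → J → ℝ) (hp : ∀ i j, 0 ≤ p i j)
    (q : ℝ) (hq : 1 ≤ q) (ℓ : ℕ) (hℓ : 1 ≤ ℓ)
    (R B T : ℝ) (hR : 0 ≤ R) (hB : 0 ≤ B) (hT : 0 ≤ T)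
    (x : Fin M → J → ℝ)
    (hx01 : ∀ i j, x i j ∈ Set.Icc (0 : ℝ) 1)
    (hx1 : ∀ j, ∑ i, x i j = 1)
    (hxR : ∀ i j, R < p i j → x i j = 0)
    (hxℓ : ∀ i, ∑ j ∈ Finset.univ.filter (fun j => T ≤ p i j), x i j ≤ (ℓ : ℝ))
    (hxB : ∀ i, ∑ j ∈ Finset.univ.filter (fun j => T ≤ p i j),
        x i j * p i j ^ q ≤ B ^ q) :
    ∃ σ : J → Fin M,
      (∀ j, p (σ j) j ≤ R) ∧
      ∀ i : Fin M, ∀ T' : Finset J, (∀ j ∈ T', σ j = i) → T'.card ≤ ℓ →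
        ∑ j ∈ T', p i j ^ q ≤ 2 * R ^ q + B ^ q + (ℓ : ℝ) * T ^ q :=
  maxnorm_makespan_topq_rounding_general M J p hp q hq ℓ R B T hR hT x hx01 hx1 hxR hxB
end

section
/- Let M ≥ 1 and let J be a finite set of jobs with processing times p(i,j) ≥ 0 for each machine i ∈ {1,…,M} and job j ∈ J. Let q ≥ 1 be a real number, ℓ ≥ 1 an integer, R, B, T ≥ 0 reals, and α : {1,…,M} → ℝ≥0 machine weights. Suppose x : {1,…,M} × J → [0,1] satisfies: (i) Σ_{i=1}^{M} x_{ij} = 1 for every j ∈ J; (ii) x_{ij} = 0 whenever p(i,j) > R; (iii) Σ_{j : p(i,j) ≥ T} x_{ij} ≤ ℓ for every i; (iv) Σ_{j : p(i,j) ≥ T} x_{ij}·p(i,j)^q ≤ B^q for every i. Then there exists an assignment σ : J → {1,…,M} such that p(σ(j), j) ≤ R for every j, such that Σ_{i=1}^{M} α_i·|σ^{-1}(i)| ≤ Σ_{i=1}^{M} α_i·Σ_{j ∈ J} x_{ij}, and such that for every machine i and every subset T' ⊆ σ^{-1}(i) with |T'| ≤ ℓ one has Σ_{j ∈ T'} p(i,j)^q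 ≤ 2R^q + B^q + ℓ·T^q. -/
/-!
On each machine `i` lay the fractions `x i j` of the big jobs (`T ≤ p i j`) end to end on
`[0, ℓ]`, in order of decreasing size, and cut this interval into `ℓ` unit slots; give every
small job a private slot of its own on each machine. This is a fractional matching of jobs into
slots that saturates every job and loads every slot at most once, so by Birkhoff–von Neumann
(applied to a padded doubly stochastic matrix) some integral matching inside its support costs
no more with respect to `α`. Because of the sorting, a job in slot `t + 1` is no larger than
any job meeting slot `t`, and slot `t` is full; hence the big jobs on a machine contribute at
most `R ^ q` (slot `0`) plus `∑ x i j * p i j ^ q ≤ B ^ q`, while at most `ℓ` small jobs add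
`ℓ * T ^ q`.
-/

open Finset Matrix Real

theorem exists_perm_pos_sum_le_of_mem_doublyStochastic {n : Type*} [Fintype n] [DecidableEq n]
    {A : Matrix n n ℝ} (hA : A ∈ doublyStochastic ℝ n) (C : Matrix n n ℝ) :
    ∃ σ : Equiv.Perm n, (∀ k, 0 < A k (σ k)) ∧ ∑ k, C k (σ k) ≤ ∑ k, ∑ k', A k k' * C k k' := by
  obtain ⟨w, hw0, hw1, rfl⟩ := exists_eq_sum_perm_of_mem_doublyStochastic hA
  set avg := ∑ k, ∑ k', (∑ σ, w σ • σ.permMatrix ℝ) k k' * C k k'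
  have entry : ∀ k k', (∑ σ, w σ • σ.permMatrix ℝ) k k' = ∑ σ, if σ k = k' then w σ else 0 := by
    intro k k'
    simp [Matrix.sum_apply, PEquiv.toMatrix_apply]
  have avg_eq : avg = ∑ σ, w σ * ∑ k, C k (σ k) := by
    calc avg = ∑ k, ∑ σ : Equiv.Perm n, ∑ k', if σ k = k' then w σ * C k k' else 0 := by
          simp only [avg, entry, sum_mul, ite_mul, zero_mul]
          exact sum_congr rfl fun k _ => sum_comm
      _ = ∑ k, ∑ σ : Equiv.Perm n, w σ * C k (σ k) := by simp
      _ = _ := by rw [sum_comm]; simp [mul_sum]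
  set supp := univ.filter (0 < w ·)
  have sum_supp : ∀ c : Equiv.Perm n → ℝ, ∑ σ ∈ supp, w σ * c σ = ∑ σ, w σ * c σ :=
    fun c => sum_filter_of_ne fun σ _ h => (hw0 σ).lt_of_ne' (left_ne_zero_of_mul h)
  have supp_nonempty : supp.Nonempty := by
    by_contra h
    rw [not_nonempty_iff_eq_empty, filter_eq_empty_iff] at h
    linarith [sum_nonpos (s := univ) fun σ _ => not_lt.1 (h (mem_univ σ))]
  obtain ⟨σ, hσ, hle⟩ := exists_le_of_sum_le (f := fun σ => w σ * ∑ k, C k (σ k))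
    (g := fun σ => w σ * avg) supp_nonempty
    (by rw [sum_supp, sum_supp, ← sum_mul, hw1, one_mul, avg_eq])
  have hwσ : 0 < w σ := (mem_filter.1 hσ).2
  refine ⟨σ, fun k => ?_, le_of_mul_le_mul_left hle hwσ⟩
  rw [entry]
  calc 0 < w σ := hwσ
    _ = if σ k = σ k then w σ else 0 := by simp
    _ ≤ _ := single_le_sum (f := fun τ : Equiv.Perm n => if τ k = σ k then w τ else 0)
        (fun τ _ => by split_ifs <;> simp [hw0]) (mem_univ σ)

theorem fromBlocks_mem_doublyStochastic {J S : Type*} [Fintype J] [Fintype S] [DecidableEq J]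
    [DecidableEq S] (f : Matrix J S ℝ) (h0 : ∀ j s, 0 ≤ f j s) (hrow : ∀ j, ∑ s, f j s = 1)
    (hcol : ∀ s, ∑ j, f j s ≤ 1) :
    fromBlocks 0 f fᵀ (diagonal fun s => 1 - ∑ j, f j s) ∈ doublyStochastic ℝ (J ⊕ S) := by
  rw [mem_doublyStochastic_iff_sum]
  refine ⟨?_, ?_, ?_⟩
  · rintro (j | s) (j' | s') <;> simp [h0, diagonal_apply]
    split_ifs <;> linarith [hcol s]
  all_goals rintro (j | s) <;> simp [Fintype.sum_sum_type, hrow, diagonal_apply]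

theorem exists_injective_pos_sum_le {J S : Type*} [Fintype J] [Fintype S] [DecidableEq J]
    [DecidableEq S] (f : J → S → ℝ) (c : S → ℝ) (h0 : ∀ j s, 0 ≤ f j s)
    (hrow : ∀ j, ∑ s, f j s = 1) (hcol : ∀ s, ∑ j, f j s ≤ 1) :
    ∃ m : J → S, Function.Injective m ∧ (∀ j, 0 < f j (m j)) ∧
      ∑ j, c (m j) ≤ ∑ j, ∑ s, f j s * c s := by
  obtain ⟨σ, hpos, hcost⟩ := exists_perm_pos_sum_le_of_mem_doublyStochastic
    (fromBlocks_mem_doublyStochastic (of f) h0 hrow hcol) (of (Sum.elim (fun _ => Sum.elim 0 c) 0))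
  have to_slot : ∀ j, ∃ s, σ (.inl j) = .inr s := by
    intro j
    have := hpos (.inl j)
    cases h : σ (.inl j) with
    | inl j' => simp [h, fromBlocks_apply₁₁] at this
    | inr s => exact ⟨s, rfl⟩
  choose m hm using to_slot
  refine ⟨m, fun j j' h => ?_, fun j => by simpa [hm, fromBlocks_apply₁₂] using hpos (.inl j), ?_⟩
  · simpa using σ.injective ((hm j).trans ((congrArg _ h).trans (hm j').symm))
  · simpa [Fintype.sum_sum_type, hm, fromBlocks_apply₁₂] using hcost

/-- The length of `[0, z] ∩ [t, t + 1]`. -/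
def unitOverlap (t : ℕ) (z : ℝ) : ℝ := max 0 (min 1 (z - t))

theorem unitOverlap_mono (t : ℕ) : Monotone (unitOverlap t) :=
  fun _ _ h => max_le_max le_rfl (min_le_min le_rfl (by linarith))

theorem unitOverlap_le_one (t : ℕ) (z : ℝ) : unitOverlap t z ≤ 1 :=
  max_le zero_le_one (min_le_left _ _)

theorem unitOverlap_of_le {t : ℕ} {z : ℝ} (h : z ≤ t) : unitOverlap t z = 0 := by
  unfold unitOverlap; grind

theorem unitOverlap_of_ge {t : ℕ} {z : ℝ} (h : t + 1 ≤ z) : unitOverlap t z = 1 := by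
  unfold unitOverlap; grind

theorem lt_of_unitOverlap_lt {t : ℕ} {a b : ℝ} (h : unitOverlap t a < unitOverlap t b) :
    a < t + 1 ∧ (t : ℝ) < b := by
  unfold unitOverlap at h; constructor <;> grind

theorem sum_range_unitOverlap (ℓ : ℕ) (z : ℝ) :
    ∑ t ∈ range ℓ, unitOverlap t z = max 0 (min (ℓ : ℝ) z) := by
  induction ℓ with
  | zero => simp
  | succ ℓ ih =>
    rw [sum_range_succ, ih, unitOverlap]
    push_cast
    grind

/-- The length of the part of slot `[t, t + 1]` covered by the `k`-th block when the weights
`y 0, y 1, …` are laid end to end from `0`. -/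
def slotPiece (y : ℕ → ℝ) (k t : ℕ) : ℝ :=
  unitOverlap t (∑ i ∈ range (k + 1), y i) - unitOverlap t (∑ i ∈ range k, y i)

theorem sum_range_slotPiece_jobs (y : ℕ → ℝ) (N t : ℕ) :
    ∑ k ∈ range N, slotPiece y k t = unitOverlap t (∑ i ∈ range N, y i) := by
  simp only [slotPiece]
  simp [sum_range_sub (fun k => unitOverlap t (∑ i ∈ range k, y i)), unitOverlap_of_le]

section SlotPiece

variable {y : ℕ → ℝ} (hy : ∀ k, 0 ≤ y k)
include hy

theorem monotone_sum_range_of_nonneg : Monotone fun k => ∑ i ∈ range k, y i :=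
  fun _ _ h => sum_le_sum_of_subset_of_nonneg (range_mono h) fun i _ _ => hy i

theorem slotPiece_nonneg (k t : ℕ) : 0 ≤ slotPiece y k t :=
  sub_nonneg.2 (unitOverlap_mono t (monotone_sum_range_of_nonneg hy k.le_succ))

theorem sum_range_slotPiece_slots {ℓ k : ℕ} (hk : ∑ i ∈ range (k + 1), y i ≤ ℓ) :
    ∑ t ∈ range ℓ, slotPiece y k t = y k := by
  have h0 : 0 ≤ ∑ i ∈ range k, y i := sum_nonneg fun i _ => hy i
  rw [sum_range_succ] at hk
  simp only [slotPiece, sum_sub_distrib, sum_range_unitOverlap, sum_range_succ]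
  grind

theorem slotPiece_pos {k t : ℕ} (h : 0 < slotPiece y k t) :
    0 < y k ∧ ∑ i ∈ range k, y i < t + 1 ∧ (t : ℝ) < ∑ i ∈ range (k + 1), y i := by
  refine ⟨(hy k).lt_of_ne fun hk => ?_, lt_of_unitOverlap_lt (sub_pos.1 h)⟩
  simp [slotPiece, sum_range_succ, ← hk] at h

theorem le_sum_slotPiece_mul {v : ℕ → ℝ} {N k t : ℕ} (hv : ∀ k k', k ≤ k' → k' < N → v k' ≤ v k)
    (hk : k < N) (h : 0 < slotPiece y k (t + 1)) :
    v k ≤ ∑ k' ∈ range N, slotPiece y k' t * v k' := by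
  have hS := monotone_sum_range_of_nonneg hy
  obtain ⟨-, -, hkt⟩ := slotPiece_pos hy h
  push_cast at hkt
  have slot_full : ∑ k' ∈ range N, slotPiece y k' t = 1 := by
    rw [sum_range_slotPiece_jobs]
    exact unitOverlap_of_ge (by linarith [hS hk])
  calc v k = ∑ k' ∈ range N, slotPiece y k' t * v k := by rw [← sum_mul, slot_full, one_mul]
    _ ≤ ∑ k' ∈ range N, slotPiece y k' t * v k' := by
      refine sum_le_sum fun k' hk' => ?_
      rcases (slotPiece_nonneg hy k' t).eq_or_lt with h0 | hpos
      · simp [← h0]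
      · obtain ⟨-, hk't, -⟩ := slotPiece_pos hy hpos
        have : k' ≤ k := by
          by_contra! hlt
          linarith [hS hlt]
        exact mul_le_mul_of_nonneg_left (hv k' k this hk) hpos.le

end SlotPiece

/-- `g j t` is the part of job `j` (of weight `w j` and size `v j`) put into slot `t`. -/
structure IsSlotSplit {J : Type*} [Fintype J] (w v : J → ℝ) (ℓ : ℕ) (g : J → ℕ → ℝ) : Prop where
  nonneg : ∀ j t, 0 ≤ g j t
  sum_slots : ∀ j, ∑ t ∈ range ℓ, g j t = w j
  sum_jobs_le_one : ∀ t, ∑ j, g j t ≤ 1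
  pos_of_pos : ∀ j t, 0 < g j t → 0 < w j
  le_prev_slot : ∀ j t, 0 < g j (t + 1) → v j ≤ ∑ j', g j' t * v j'

theorem isSlotSplit_slotPiece {N ℓ : ℕ} {y v : ℕ → ℝ} (hy : ∀ k, 0 ≤ y k)
    (hv : ∀ k k', k ≤ k' → k' < N → v k' ≤ v k) (hsum : ∑ i ∈ range N, y i ≤ ℓ) :
    IsSlotSplit (fun k : Fin N => y k) (fun k : Fin N => v k) ℓ (fun k => slotPiece y k) where
  nonneg k t := slotPiece_nonneg hy k t
  sum_slots k := sum_range_slotPiece_slots hy ((monotone_sum_range_of_nonneg hy k.2).trans hsum)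
  sum_jobs_le_one t := by
    rw [Fin.sum_univ_eq_sum_range (fun k => slotPiece y k t), sum_range_slotPiece_jobs]
    exact unitOverlap_le_one _ _
  pos_of_pos k t h := (slotPiece_pos hy h).1
  le_prev_slot k t h := by
    rw [Fin.sum_univ_eq_sum_range (fun k => slotPiece y k t * v k)]
    exact le_sum_slotPiece_mul hy hv k.2 h

theorem IsSlotSplit.comp_equiv {J K : Type*} [Fintype J] [Fintype K] {w v : K → ℝ} {ℓ : ℕ}
    {g : K → ℕ → ℝ} (h : IsSlotSplit w v ℓ g) (e : J ≃ K) :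
    IsSlotSplit (w ∘ e) (v ∘ e) ℓ (g ∘ e) where
  nonneg j := h.nonneg (e j)
  sum_slots j := h.sum_slots (e j)
  sum_jobs_le_one t := by simpa [e.sum_comp (fun k => g k t)] using h.sum_jobs_le_one t
  pos_of_pos j := h.pos_of_pos (e j)
  le_prev_slot j t hj := by
    simpa [e.sum_comp (fun k => g k t * v k)] using h.le_prev_slot (e j) t hj

theorem exists_equiv_fin_antitone {J α : Type*} [Fintype J] [LinearOrder α] (v : J → α) :
    ∃ e : Fin (Fintype.card J) ≃ J, Antitone (v ∘ e) := by
  let e₀ := (Fintype.equivFin J).symm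
  let f := fun k => OrderDual.toDual (v (e₀ k))
  exact ⟨(Tuple.sort f).trans e₀, fun a b hab => Tuple.monotone_sort f hab⟩

theorem exists_isSlotSplit {J : Type*} [Fintype J] (w v : J → ℝ) (hw : ∀ j, 0 ≤ w j) {ℓ : ℕ}
    (hsum : ∑ j, w j ≤ ℓ) : ∃ g, IsSlotSplit w v ℓ g := by
  obtain ⟨e, he⟩ := exists_equiv_fin_antitone v
  let extend (u : J → ℝ) (k : ℕ) : ℝ := if h : k < Fintype.card J then u (e ⟨k, h⟩) else 0
  have extend_fin (u : J → ℝ) : (fun k : Fin (Fintype.card J) => extend u k) = u ∘ e := by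
    ext k; simp [extend]
  have split := isSlotSplit_slotPiece (N := Fintype.card J) (ℓ := ℓ) (y := extend w)
    (v := extend v)
    (fun k => by by_cases h : k < Fintype.card J <;> simp [extend, h, hw])
    (fun k k' hkk' hk' => by
      simpa [extend, hk', hkk'.trans_lt hk'] using he (Fin.mk_le_mk.2 hkk'))
    (by rw [← Fin.sum_univ_eq_sum_range, extend_fin, ← e.sum_comp w] at *; exact hsum)
  rw [extend_fin, extend_fin] at split
  exact ⟨_, by simpa [Function.comp_assoc] using split.comp_equiv e.symm⟩

theorem IsSlotSplit.sum_le {J : Type*} [Fintype J] {w v : J → ℝ} {ℓ : ℕ} {g : J → ℕ → ℝ}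
    (h : IsSlotSplit w v ℓ g) (hv : ∀ j, 0 ≤ v j) {R : ℝ} (hR0 : 0 ≤ R)
    (hR : ∀ j, 0 < w j → v j ≤ R) {U : Finset J} {s : J → ℕ} (hs : Set.InjOn s U)
    (hsℓ : ∀ j ∈ U, s j < ℓ) (hpos : ∀ j ∈ U, 0 < g j (s j)) :
    ∑ j ∈ U, v j ≤ R + ∑ j, w j * v j := by
  let bound : ℕ → ℝ
    | 0 => R
    | t + 1 => ∑ j, g j t * v j
  have bound_nonneg : ∀ t, 0 ≤ bound t
    | 0 => hR0
    | t + 1 => sum_nonneg fun j _ => mul_nonneg (h.nonneg j t) (hv j)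
  have le_bound : ∀ j ∈ U, v j ≤ bound (s j) := by
    intro j hj
    have hgj := hpos j hj
    cases hsj : s j with
    | zero => exact hR j (h.pos_of_pos j _ hgj)
    | succ t => exact h.le_prev_slot j t (hsj ▸ hgj)
  calc ∑ j ∈ U, v j ≤ ∑ j ∈ U, bound (s j) := sum_le_sum le_bound
    _ = ∑ t ∈ U.image s, bound t := (sum_image hs).symm
    _ ≤ ∑ t ∈ range (ℓ + 1), bound t := by
      refine sum_le_sum_of_subset_of_nonneg (fun t ht => ?_) fun t _ _ => bound_nonneg t
      obtain ⟨j, hj, rfl⟩ := mem_image.1 ht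
      exact mem_range.2 ((hsℓ j hj).trans ℓ.lt_succ_self)
    _ = R + ∑ j, w j * v j := by
      rw [sum_range_succ', add_comm, sum_comm]
      simp only [bound, ← sum_mul, h.sum_slots]

/-- Slot `(i, inl t)` is the `t`-th unit slot of machine `i`, slot `(i, inr j)` the private slot
of job `j` on machine `i`, which takes its small part `u i j`. -/
def slotFraction {ι J : Type*} [DecidableEq J] (ℓ : ℕ) (g : ι → J → ℕ → ℝ) (u : ι → J → ℝ)
    (j : J) : ι × (Fin ℓ ⊕ J) → ℝ
  | (i, .inl t) => g i j t
  | (i, .inr j') => if j' = j then u i j else 0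

section SlotFraction

variable {ι J : Type*} [Fintype J] [DecidableEq J] {ℓ : ℕ} {w v u : ι → J → ℝ}
  {g : ι → J → ℕ → ℝ}

theorem slotFraction_nonneg (hg : ∀ i, IsSlotSplit (w i) (v i) ℓ (g i))
    (hu : ∀ i j, 0 ≤ u i j) (j : J) : ∀ s, 0 ≤ slotFraction ℓ g u j s
  | (i, .inl t) => (hg i).nonneg j t
  | (i, .inr j') => by simp only [slotFraction]; exact ite_nonneg (hu i j) le_rfl

theorem sum_slotFraction_slots (hg : ∀ i, IsSlotSplit (w i) (v i) ℓ (g i)) (j : J) (i : ι) :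
    ∑ k, slotFraction ℓ g u j (i, k) = w i j + u i j := by
  simp [Fintype.sum_sum_type, slotFraction, Fin.sum_univ_eq_sum_range (g i j), (hg i).sum_slots]

theorem sum_slotFraction_jobs_le_one (hg : ∀ i, IsSlotSplit (w i) (v i) ℓ (g i))
    (hu : ∀ i j, u i j ≤ 1) : ∀ s, ∑ j, slotFraction ℓ g u j s ≤ 1
  | (i, .inl t) => (hg i).sum_jobs_le_one t
  | (i, .inr j') => by simp [slotFraction, hu]

theorem pos_add_of_slotFraction_pos (hg : ∀ i, IsSlotSplit (w i) (v i) ℓ (g i))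
    (hu : ∀ i j, 0 ≤ u i j) {j : J} {i : ι} {k : Fin ℓ ⊕ J}
    (h : 0 < slotFraction ℓ g u j (i, k)) : 0 < w i j + u i j := by
  have hw : 0 ≤ w i j := (hg i).sum_slots j ▸ sum_nonneg fun t _ => (hg i).nonneg j t
  rcases k with t | j'
  · linarith [(hg i).pos_of_pos j t h, hu i j]
  · simp only [slotFraction] at h
    split_ifs at h <;> linarith

theorem sum_le_of_slotFraction_pos (hg : ∀ i, IsSlotSplit (w i) (v i) ℓ (g i))
    (hv : ∀ i j, 0 ≤ v i j) {R : ℝ} (hR0 : 0 ≤ R) (hR : ∀ i j, 0 < w i j → v i j ≤ R)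
    {m : J → ι × (Fin ℓ ⊕ J)} (hm : Function.Injective m)
    (hm_pos : ∀ j, 0 < slotFraction ℓ g u j (m j)) (i : ι) {U : Finset J}
    (hU : ∀ j ∈ U, (m j).1 = i ∧ u i j = 0) :
    ∑ j ∈ U, v i j ≤ R + ∑ j, w i j * v i j := by
  have in_slot : ∀ j ∈ U, ∃ t, ∃ ht : t < ℓ, m j = (i, .inl ⟨t, ht⟩) := by
    intro j hj
    obtain ⟨hmi, hu0⟩ := hU j hj
    have hpos := hm_pos j
    rcases hmj : m j with ⟨i', t | j'⟩ <;> rw [hmj] at hmi hpos <;> obtain rfl : i' = i := hmi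
    · exact ⟨t, t.2, rfl⟩
    · simp only [slotFraction] at hpos
      split_ifs at hpos <;> linarith
  choose! s hsℓ hms using in_slot
  refine (hg i).sum_le (hv i) hR0 (hR i) (fun j hj j' hj' h => hm ?_) hsℓ
    fun j hj => by simpa [hms j hj, slotFraction] using hm_pos j
  rw [hms j hj, hms j' hj']
  simp [h]

theorem sum_sum_slotFraction_mul [Fintype ι] (hg : ∀ i, IsSlotSplit (w i) (v i) ℓ (g i))
    (α : ι → ℝ) :
    ∑ j, ∑ s, slotFraction ℓ g u j s * α s.1 = ∑ i, α i * ∑ j, (w i j + u i j) := by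
  simp_rw [Fintype.sum_prod_type, ← sum_mul, sum_slotFraction_slots hg, mul_sum]
  rw [sum_comm]
  exact sum_congr rfl fun i _ => sum_congr rfl fun j _ => mul_comm _ _

end SlotFraction

theorem sum_mul_card_fiber {ι J : Type*} [Fintype ι] [Fintype J] [DecidableEq ι] (α : ι → ℝ)
    (σ : J → ι) : ∑ i, α i * #{j | σ j = i} = ∑ j, α (σ j) := by
  rw [← sum_fiberwise univ σ]
  refine sum_congr rfl fun i _ => ?_
  rw [sum_congr rfl fun j hj => congrArg α (mem_filter.1 hj).2, sum_const, nsmul_eq_mul, mul_comm]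

theorem sum_rpow_filter_not_le {J : Type*} {s : Finset J} {f : J → ℝ} (hf : ∀ j, 0 ≤ f j)
    {T q : ℝ} (hT : 0 ≤ T) (hq : 0 ≤ q) {ℓ : ℕ} (hs : #s ≤ ℓ) :
    ∑ j ∈ s with ¬ T ≤ f j, f j ^ q ≤ ℓ * T ^ q :=
  calc _ ≤ #{j ∈ s | ¬ T ≤ f j} • T ^ q := sum_le_card_nsmul _ _ _ fun j hj =>
        rpow_le_rpow (hf j) (not_le.1 (mem_filter.1 hj).2).le hq
    _ ≤ ℓ * T ^ q := by
      rw [nsmul_eq_mul]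
      gcongr
      exact_mod_cast (card_filter_le _ _).trans hs

theorem fair_maxnorm_makespan_topq_rounding_general
    (M : ℕ) (J : Type) [Fintype J]
    (p : Fin M → J → ℝ) (hp : ∀ i j, 0 ≤ p i j)
    (q : ℝ) (hq : 1 ≤ q) (ℓ : ℕ)
    (R B T : ℝ) (hR : 0 ≤ R) (hT : 0 ≤ T)
    (α : Fin M → ℝ)
    (x : Fin M → J → ℝ)
    (hx01 : ∀ i j, x i j ∈ Set.Icc (0 : ℝ) 1)
    (hx1 : ∀ j, ∑ i, x i j = 1)
    (hxR : ∀ i j, R < p i j → x i j = 0)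
    (hxℓ : ∀ i, ∑ j ∈ Finset.univ.filter (fun j => T ≤ p i j), x i j ≤ (ℓ : ℝ))
    (hxB : ∀ i, ∑ j ∈ Finset.univ.filter (fun j => T ≤ p i j),
        x i j * p i j ^ q ≤ B ^ q) :
    ∃ σ : J → Fin M,
      (∀ j, p (σ j) j ≤ R) ∧
      (∑ i, α i * ((Finset.univ.filter (fun j => σ j = i)).card : ℝ) ≤
        ∑ i, α i * ∑ j, x i j) ∧
      ∀ i : Fin M, ∀ T' : Finset J, (∀ j ∈ T', σ j = i) → T'.card ≤ ℓ →
        ∑ j ∈ T', p i j ^ q ≤ 2 * R ^ q + B ^ q + (ℓ : ℝ) * T ^ q := by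
  classical
  let big i j := if T ≤ p i j then x i j else 0
  let small i j := if T ≤ p i j then 0 else x i j
  have big_add_small i j : big i j + small i j = x i j := by
    by_cases h : T ≤ p i j <;> simp [big, small, h]
  have hsmall i j : small i j ∈ Set.Icc (0 : ℝ) 1 := by
    by_cases h : T ≤ p i j <;> simp [small, h, hx01 i j]
  have le_R i j (h : 0 < big i j + small i j) : p i j ≤ R :=
    le_of_not_gt fun hR => by simp [big_add_small, hxR i j hR] at h
  choose g hg using fun i => exists_isSlotSplit (big i) (fun j => p i j ^ q)
    (fun j => by by_cases h : T ≤ p i j <;> simp [big, h, (hx01 i j).1])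
    (by simpa [big, sum_filter] using hxℓ i)
  obtain ⟨m, hm_inj, hm_pos, hm_cost⟩ := exists_injective_pos_sum_le
    (slotFraction ℓ g small) (fun s => α s.1) (slotFraction_nonneg hg fun i j => (hsmall i j).1)
    (fun j => by simp [Fintype.sum_prod_type, sum_slotFraction_slots hg, big_add_small, hx1])
    (sum_slotFraction_jobs_le_one hg fun i j => (hsmall i j).2)
  refine ⟨fun j => (m j).1, fun j => ?_, ?_, fun i T' hT' hcard => ?_⟩
  · exact le_R _ j (pos_add_of_slotFraction_pos hg (fun i j => (hsmall i j).1) (hm_pos j))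
  · rw [sum_mul_card_fiber]
    simpa only [sum_sum_slotFraction_mul hg, big_add_small] using hm_cost
  · have big_part : ∑ j ∈ T' with T ≤ p i j, p i j ^ q ≤ R ^ q + B ^ q :=
      calc _ ≤ R ^ q + ∑ j, big i j * p i j ^ q :=
            sum_le_of_slotFraction_pos hg (fun i j => rpow_nonneg (hp i j) q) (rpow_nonneg hR q)
              (fun i j h => rpow_le_rpow (hp i j) (le_R i j (by linarith [(hsmall i j).1]))
                (by linarith))
              hm_inj hm_pos i fun j hj =>
                ⟨hT' j (mem_filter.1 hj).1, by simp [small, (mem_filter.1 hj).2]⟩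
        _ ≤ R ^ q + B ^ q := by simpa [big, sum_filter, ite_mul] using hxB i
    rw [← sum_filter_add_sum_filter_not T' (fun j => T ≤ p i j)]
    linarith [sum_rpow_filter_not_le (hp i) hT (zero_le_one.trans hq) hcard, rpow_nonneg hR q]

/-- **Weighted rounding for Fair Max-Norm Makespan (core of the separation oracle).**
Given a feasible fractional solution `x` of the LP relaxation `LB(R,B,T)` and machine
weights `α`, there exists an integral assignment `σ` using only pairs of size at most `R`,
whose `α`-weighted job counts do not exceed the `α`-weighted fractional job counts of `x`,
and whose `Top_ℓ^{(q)}` value on each machine is at most `(2R^q + B^q + ℓ·T^q)^{1/q}`. -/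
theorem fair_maxnorm_makespan_topq_rounding
    (M : ℕ) (hM : 1 ≤ M) (J : Type) [Fintype J]
    (p : Fin M → J → ℝ) (hp : ∀ i j, 0 ≤ p i j)
    (q : ℝ) (hq : 1 ≤ q) (ℓ : ℕ) (hℓ : 1 ≤ ℓ)
    (R B T : ℝ) (hR : 0 ≤ R) (hB : 0 ≤ B) (hT : 0 ≤ T)
    (α : Fin M → ℝ) (hα : ∀ i, 0 ≤ α i)
    (x : Fin M → J → ℝ)
    (hx01 : ∀ i j, x i j ∈ Set.Icc (0 : ℝ) 1)
    (hx1 : ∀ j, ∑ i, x i j = 1)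
    (hxR : ∀ i j, R < p i j → x i j = 0)
    (hxℓ : ∀ i, ∑ j ∈ Finset.univ.filter (fun j => T ≤ p i j), x i j ≤ (ℓ : ℝ))
    (hxB : ∀ i, ∑ j ∈ Finset.univ.filter (fun j => T ≤ p i j),
        x i j * p i j ^ q ≤ B ^ q) :
    ∃ σ : J → Fin M,
      (∀ j, p (σ j) j ≤ R) ∧
      (∑ i, α i * ((Finset.univ.filter (fun j => σ j = i)).card : ℝ) ≤
        ∑ i, α i * ∑ j, x i j) ∧
      ∀ i : Fin M, ∀ T' : Finset J, (∀ j ∈ T', σ j = i) → T'.card ≤ ℓ →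
        ∑ j ∈ T', p i j ^ q ≤ 2 * R ^ q + B ^ q + (ℓ : ℝ) * T ^ q :=
  fair_maxnorm_makespan_topq_rounding_general M J p hp q hq ℓ R B T hR hT α x hx01 hx1 hxR hxℓ hxB
end

section
/- Let n ≥ 1 be an integer, POS = {min(2^t, n) : t ∈ ℕ} ⊆ {1,…,n}, and for ℓ ∈ POS let next(ℓ) = min{s ∈ POS : s > ℓ}, with next(n) := n+1. Let w : {1,…,n+1} → ℝ≥0 be non-increasing with w_{n+1} = 0. Let R ≥ 0 and let T*, T : POS → ℝ≥0 satisfy T(ℓ) ≤ R/n + 2·T*(ℓ) for every ℓ ∈ POS. Let V ≥ 0 satisfy V ≥ R·w_1 and V ≥ T*(ℓ)·Σ_{t=1}^{ℓ} w_t for every ℓ ∈ POS. Then Σ_{ℓ ∈ POS} (w_ℓ − w_{next(ℓ)})·ℓ·T(ℓ) ≤ (1 + 2·|POS|)·V; in particular, since |POS| ≤ ⌈log₂ n⌉ + 1, the left-hand side is at most (3 + 2⌈log₂ n⌉)·V. -/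
/-! The weighted gaps `w ℓ - w (next ℓ)` telescope to `w 1 - w (n + 1)`, so the part `R/n` of each
threshold contributes at most `R·w₁ ≤ V` in total; the part `2T*(ℓ)` contributes at most `2V` per
`ℓ ∈ POS`, because `(w ℓ - w (next ℓ))·ℓ ≤ ℓ·w ℓ ≤ Σ_{t ≤ ℓ} w t` for non-increasing `w ≥ 0`. -/

/-- The geometrically spaced index set `POS = {min(2^t, n) : t ∈ ℕ} ⊆ {1,…,n}`. -/
def sparsePos (n : ℕ) : Finset ℕ :=
  (Finset.range (n + 1)).image (fun t => min (2 ^ t) n)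

/-- `next(ℓ) = min {s ∈ POS : s > ℓ}`, with the convention `next(n) = n + 1`. -/
noncomputable def sparseNext (n ℓ : ℕ) : ℕ :=
  if ℓ = n then n + 1 else sInf {s : ℕ | s ∈ sparsePos n ∧ ℓ < s}

theorem Finset.sum_sub_comp_eq_of_image_eq {ι M : Type*} [DecidableEq ι] [AddCommGroup M]
    {s : Finset ι} {g : ι → ι} {a b : ι} (f : ι → M) (hg : Set.InjOn g s)
    (himg : s.image g = insert b (s.erase a)) (ha : a ∈ s) (hb : b ∉ s) :
    ∑ x ∈ s, (f x - f (g x)) = f a - f b := by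
  have hb' : b ∉ s.erase a := fun h => hb (Finset.mem_of_mem_erase h)
  rw [Finset.sum_sub_distrib, ← Finset.sum_image hg, himg, Finset.sum_insert hb',
    ← Finset.add_sum_erase s f ha]
  abel

theorem card_nsmul_le_sum_Icc_of_antitoneOn {M : Type*} [AddCommMonoid M] [PartialOrder M]
    [IsOrderedAddMonoid M] {w : ℕ → M} {ℓ : ℕ} (hw : AntitoneOn w (Set.Icc 1 ℓ)) :
    ℓ • w ℓ ≤ ∑ t ∈ Finset.Icc 1 ℓ, w t := by
  rcases Nat.eq_zero_or_pos ℓ with rfl | hℓ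
  · simp
  simpa using Finset.card_nsmul_le_sum (Finset.Icc 1 ℓ) w (w ℓ) fun t ht => by
    rw [Finset.mem_Icc] at ht
    exact hw ⟨ht.1, ht.2⟩ ⟨hℓ, le_rfl⟩ ht.2

section

variable {n ℓ : ℕ}

theorem one_le_of_mem_sparsePos (hn : 1 ≤ n) (h : ℓ ∈ sparsePos n) : 1 ≤ ℓ := by
  obtain ⟨t, -, rfl⟩ := Finset.mem_image.mp h
  exact le_min Nat.one_le_two_pow hn

theorem le_of_mem_sparsePos (h : ℓ ∈ sparsePos n) : ℓ ≤ n := by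
  obtain ⟨t, -, rfl⟩ := Finset.mem_image.mp h
  exact min_le_right _ _

theorem one_mem_sparsePos (hn : 1 ≤ n) : 1 ∈ sparsePos n :=
  Finset.mem_image.mpr ⟨0, by simp, by simpa using hn⟩

theorem self_mem_sparsePos : n ∈ sparsePos n :=
  Finset.mem_image.mpr ⟨n, by simp, min_eq_right Nat.lt_two_pow_self.le⟩

/-- Exponents beyond `⌈log₂ n⌉` all give `n`. -/
theorem card_sparsePos_le_clog : (sparsePos n).card ≤ Nat.clog 2 n + 1 := by
  have hsub : sparsePos n ⊆ (Finset.range (Nat.clog 2 n + 1)).image (fun t => min (2 ^ t) n) := by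
    intro ℓ hℓ
    obtain ⟨t, -, rfl⟩ := Finset.mem_image.mp hℓ
    rcases le_or_gt t (Nat.clog 2 n) with ht | ht
    · exact Finset.mem_image.mpr ⟨t, by simpa [Nat.lt_succ_iff] using ht, rfl⟩
    · have hclog : n ≤ 2 ^ Nat.clog 2 n := Nat.le_pow_clog (by norm_num) n
      have ht' : n ≤ 2 ^ t := hclog.trans (Nat.pow_le_pow_right (by norm_num) ht.le)
      exact Finset.mem_image.mpr
        ⟨Nat.clog 2 n, by simp, by rw [min_eq_right hclog, min_eq_right ht']⟩
  calc (sparsePos n).card ≤ _ := Finset.card_le_card hsub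
    _ ≤ _ := Finset.card_image_le
    _ = Nat.clog 2 n + 1 := Finset.card_range _

theorem sparseNext_self : sparseNext n n = n + 1 := if_pos rfl

theorem sparseNext_spec (h : ℓ ∈ sparsePos n) (hne : ℓ ≠ n) :
    sparseNext n ℓ ∈ sparsePos n ∧ ℓ < sparseNext n ℓ := by
  rw [sparseNext, if_neg hne]
  exact Nat.sInf_mem (s := {s | s ∈ sparsePos n ∧ ℓ < s})
    ⟨n, self_mem_sparsePos, (le_of_mem_sparsePos h).lt_of_ne hne⟩

theorem sparseNext_le_of_lt {s : ℕ} (hs : s ∈ sparsePos n) (h : ℓ < s) : sparseNext n ℓ ≤ s := by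
  have hne : ℓ ≠ n := (h.trans_le (le_of_mem_sparsePos hs)).ne
  rw [sparseNext, if_neg hne]
  exact Nat.sInf_le ⟨hs, h⟩

theorem lt_sparseNext (h : ℓ ∈ sparsePos n) : ℓ < sparseNext n ℓ := by
  by_cases hne : ℓ = n
  · subst hne; rw [sparseNext_self]; exact Nat.lt_succ_self _
  · exact (sparseNext_spec h hne).2

theorem sparseNext_le_succ (h : ℓ ≤ n) : sparseNext n ℓ ≤ n + 1 := by
  rcases h.lt_or_eq with h | rfl
  · exact (sparseNext_le_of_lt self_mem_sparsePos h).trans n.le_succ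
  · exact sparseNext_self.le

theorem sparseNext_mem_Icc (hn : 1 ≤ n) (h : ℓ ∈ sparsePos n) :
    sparseNext n ℓ ∈ Set.Icc 1 (n + 1) :=
  ⟨(one_le_of_mem_sparsePos hn h).trans (lt_sparseNext h).le,
    sparseNext_le_succ (le_of_mem_sparsePos h)⟩

theorem sparseNext_strictMonoOn : StrictMonoOn (sparseNext n) (sparsePos n) :=
  fun _ _ _ hb hab => (sparseNext_le_of_lt hb hab).trans_lt (lt_sparseNext hb)

theorem image_sparseNext (hn : 1 ≤ n) :
    (sparsePos n).image (sparseNext n) = insert (n + 1) ((sparsePos n).erase 1) := by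
  have hn1 : n + 1 ∉ (sparsePos n).erase 1 := fun h =>
    absurd (le_of_mem_sparsePos (Finset.mem_of_mem_erase h)) (by omega)
  refine Finset.eq_of_subset_of_card_le ?_ ?_
  · intro s hs
    obtain ⟨ℓ, hℓ, rfl⟩ := Finset.mem_image.mp hs
    by_cases hne : ℓ = n
    · subst hne; rw [sparseNext_self]; exact Finset.mem_insert_self _ _
    · obtain ⟨hmem, hlt⟩ := sparseNext_spec hℓ hne
      have hℓ1 := one_le_of_mem_sparsePos hn hℓ
      exact Finset.mem_insert_of_mem (Finset.mem_erase.mpr ⟨by omega, hmem⟩)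
  · rw [Finset.card_insert_of_notMem hn1, Finset.card_erase_of_mem (one_mem_sparsePos hn),
      Finset.card_image_of_injOn sparseNext_strictMonoOn.injOn]
    exact (Nat.sub_add_cancel (Finset.card_pos.mpr ⟨1, one_mem_sparsePos hn⟩)).le

theorem sum_sub_sparseNext {M : Type*} [AddCommGroup M] (hn : 1 ≤ n) (f : ℕ → M) :
    ∑ ℓ ∈ sparsePos n, (f ℓ - f (sparseNext n ℓ)) = f 1 - f (n + 1) :=
  Finset.sum_sub_comp_eq_of_image_eq f sparseNext_strictMonoOn.injOn (image_sparseNext hn)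
    (one_mem_sparsePos hn) fun h => absurd (le_of_mem_sparsePos h) (by omega)

end

theorem gap_mul_threshold_le {g ℓ n R T Tstar V : ℝ} (hg : 0 ≤ g) (hℓ : 0 ≤ ℓ)
    (hℓn : ℓ ≤ n) (hR : 0 ≤ R) (hT : T ≤ R / n + 2 * Tstar) (hV : g * ℓ * Tstar ≤ V) :
    g * ℓ * T ≤ g * R + 2 * V := by
  have hRn : ℓ * (R / n) ≤ R := by
    rw [← mul_div_assoc]
    exact div_le_of_le_mul₀ (hℓ.trans hℓn) hR (by nlinarith)
  calc g * ℓ * T ≤ g * ℓ * (R / n + 2 * Tstar) := mul_le_mul_of_nonneg_left hT (by positivity)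
    _ = g * (ℓ * (R / n)) + 2 * (g * ℓ * Tstar) := by ring
    _ ≤ g * R + 2 * V := by gcongr

theorem sub_mul_le_sum_Icc_of_antitoneOn {w : ℕ → ℝ} {ℓ j : ℕ}
    (hw : AntitoneOn w (Set.Icc 1 ℓ)) (hwj : 0 ≤ w j) :
    (w ℓ - w j) * ℓ ≤ ∑ t ∈ Finset.Icc 1 ℓ, w t :=
  calc (w ℓ - w j) * ℓ ≤ ℓ • w ℓ := by rw [nsmul_eq_mul, mul_comm]; gcongr; linarith
    _ ≤ _ := card_nsmul_le_sum_Icc_of_antitoneOn hw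

theorem sparsified_threshold_bound_general
    (n : ℕ) (hn : 1 ≤ n)
    (w : ℕ → ℝ)
    (hw0 : ∀ t ∈ Finset.Icc 1 (n + 1), 0 ≤ w t)
    (hwmono : ∀ s ∈ Finset.Icc 1 (n + 1), ∀ t ∈ Finset.Icc 1 (n + 1), s ≤ t → w t ≤ w s)
    (hwlast : w (n + 1) = 0)
    (R : ℝ) (hR : 0 ≤ R)
    (Tstar T : ℕ → ℝ)
    (hTstar0 : ∀ ℓ ∈ sparsePos n, 0 ≤ Tstar ℓ)
    (hTle : ∀ ℓ ∈ sparsePos n, T ℓ ≤ R / n + 2 * Tstar ℓ)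
    (V : ℝ) (hV0 : 0 ≤ V)
    (hVR : R * w 1 ≤ V)
    (hVT : ∀ ℓ ∈ sparsePos n, Tstar ℓ * ∑ t ∈ Finset.Icc 1 ℓ, w t ≤ V) :
    (∑ ℓ ∈ sparsePos n, (w ℓ - w (sparseNext n ℓ)) * ℓ * T ℓ ≤
        (1 + 2 * ((sparsePos n).card : ℝ)) * V) ∧
    (∑ ℓ ∈ sparsePos n, (w ℓ - w (sparseNext n ℓ)) * ℓ * T ℓ ≤
        (3 + 2 * (Nat.clog 2 n : ℝ)) * V) := by
  have hanti : AntitoneOn w (Set.Icc 1 (n + 1)) := fun s hs t ht =>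
    hwmono s (Finset.mem_Icc.mpr hs) t (Finset.mem_Icc.mpr ht)
  have hterm : ∀ ℓ ∈ sparsePos n,
      (w ℓ - w (sparseNext n ℓ)) * ℓ * T ℓ ≤ (w ℓ - w (sparseNext n ℓ)) * R + 2 * V := by
    intro ℓ hℓ
    have hℓn := le_of_mem_sparsePos hℓ
    have hℓmem : ℓ ∈ Set.Icc 1 (n + 1) := ⟨one_le_of_mem_sparsePos hn hℓ, by omega⟩
    have hnext := sparseNext_mem_Icc hn hℓ
    have hgap := sub_nonneg.mpr (hanti hℓmem hnext (lt_sparseNext hℓ).le)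
    refine gap_mul_threshold_le hgap (by positivity) (by exact_mod_cast hℓn) hR (hTle ℓ hℓ) ?_
    calc (w ℓ - w (sparseNext n ℓ)) * ℓ * Tstar ℓ
        = Tstar ℓ * ((w ℓ - w (sparseNext n ℓ)) * ℓ) := by ring
      _ ≤ Tstar ℓ * ∑ t ∈ Finset.Icc 1 ℓ, w t := by
          gcongr
          · exact hTstar0 ℓ hℓ
          · exact sub_mul_le_sum_Icc_of_antitoneOn
              (hanti.mono (Set.Icc_subset_Icc_right (by omega))) (hw0 _ (Finset.mem_Icc.mpr hnext))
      _ ≤ V := hVT ℓ hℓ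
  have hmain : ∑ ℓ ∈ sparsePos n, (w ℓ - w (sparseNext n ℓ)) * ℓ * T ℓ ≤
      (1 + 2 * ((sparsePos n).card : ℝ)) * V :=
    calc _ ≤ ∑ ℓ ∈ sparsePos n, ((w ℓ - w (sparseNext n ℓ)) * R + 2 * V) := Finset.sum_le_sum hterm
      _ = R * w 1 + (sparsePos n).card * (2 * V) := by
          rw [Finset.sum_add_distrib, ← Finset.sum_mul, sum_sub_sparseNext hn, hwlast,
            Finset.sum_const, nsmul_eq_mul]
          ring
      _ ≤ (1 + 2 * ((sparsePos n).card : ℝ)) * V := by linarith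
  have hcard : ((sparsePos n).card : ℝ) ≤ Nat.clog 2 n + 1 := by
    exact_mod_cast card_sparsePos_le_clog
  exact ⟨hmain, hmain.trans (mul_le_mul_of_nonneg_right (by linarith) hV0)⟩

/-- **The sparsified-threshold (load-gap) bound.**
If `w` is a non-increasing nonnegative weight vector with `w (n+1) = 0`, the guessed
thresholds satisfy `T(ℓ) ≤ R/n + 2T*(ℓ)`, and `V` dominates `R·w₁` and every
`T*(ℓ)·Σ_{t≤ℓ} w_t`, then `Σ_{ℓ ∈ POS} (w_ℓ − w_{next(ℓ)})·ℓ·T(ℓ) ≤ (1 + 2|POS|)·V`;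
in particular, since `|POS| ≤ ⌈log₂ n⌉ + 1`, it is at most `(3 + 2⌈log₂ n⌉)·V`. -/
theorem sparsified_threshold_bound
    (n : ℕ) (hn : 1 ≤ n)
    (w : ℕ → ℝ)
    (hw0 : ∀ t ∈ Finset.Icc 1 (n + 1), 0 ≤ w t)
    (hwmono : ∀ s ∈ Finset.Icc 1 (n + 1), ∀ t ∈ Finset.Icc 1 (n + 1), s ≤ t → w t ≤ w s)
    (hwlast : w (n + 1) = 0)
    (R : ℝ) (hR : 0 ≤ R)
    (Tstar T : ℕ → ℝ)
    (hTstar0 : ∀ ℓ ∈ sparsePos n, 0 ≤ Tstar ℓ)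
    (hT0 : ∀ ℓ ∈ sparsePos n, 0 ≤ T ℓ)
    (hTle : ∀ ℓ ∈ sparsePos n, T ℓ ≤ R / n + 2 * Tstar ℓ)
    (V : ℝ) (hV0 : 0 ≤ V)
    (hVR : R * w 1 ≤ V)
    (hVT : ∀ ℓ ∈ sparsePos n, Tstar ℓ * ∑ t ∈ Finset.Icc 1 ℓ, w t ≤ V) :
    (∑ ℓ ∈ sparsePos n, (w ℓ - w (sparseNext n ℓ)) * ℓ * T ℓ ≤
        (1 + 2 * ((sparsePos n).card : ℝ)) * V) ∧
    (∑ ℓ ∈ sparsePos n, (w ℓ - w (sparseNext n ℓ)) * ℓ * T ℓ ≤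
        (3 + 2 * (Nat.clog 2 n : ℝ)) * V) :=
  sparsified_threshold_bound_general n hn w hw0 hwmono hwlast R hR Tstar T hTstar0 hTle V hV0 hVR
    hVT
end

section
/- For every integer t ≥ 0, defining w_ℓ := √ℓ − √(ℓ−1) for integers ℓ ≥ 1, one has w_1 + Σ_{l=1}^{t} w_{2^l}·(√(2^l) − √(2^{l−1})) ≥ (1 − 1/√2)·(t+1)/2. -/
/-! Every summand is at least `(1 - 1/√2)/2`, as is the leading term `w₁ = 1`: the weight
`√x - √(x-1) = 1/(√x + √(x-1))` is at least `1/(2√x)`, while `√(2^l) - √(2^(l-1)) = (1 - 1/√2)·√(2^l)`. -/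

open Real Finset

lemma one_le_sqrt_sub_sqrt_sub_one_mul_two_mul_sqrt {x : ℝ} (hx : 1 ≤ x) :
    1 ≤ (√x - √(x - 1)) * (2 * √x) := by
  have hconj : (√x - √(x - 1)) * (√x + √(x - 1)) = 1 := by
    nlinarith [sq_sqrt (by linarith : (0 : ℝ) ≤ x), sq_sqrt (by linarith : (0 : ℝ) ≤ x - 1)]
  have hmono : √(x - 1) ≤ √x := sqrt_le_sqrt (by linarith)
  have hgap : 0 ≤ √x - √(x - 1) := by linarith
  calc 1 = (√x - √(x - 1)) * (√x + √(x - 1)) := hconj.symm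
    _ ≤ (√x - √(x - 1)) * (2 * √x) := by gcongr; linarith

lemma one_sub_inv_sqrt_two_nonneg : 0 ≤ 1 - 1 / √2 := by
  have : 1 / √2 ≤ 1 := by
    rw [div_le_one (by positivity)]
    exact one_le_sqrt.mpr one_le_two
  linarith

lemma one_sub_inv_sqrt_two_div_two_le_mul {x : ℝ} (hx : 1 ≤ x) :
    (1 - 1 / √2) / 2 ≤ (√x - √(x - 1)) * (√x - √x / √2) := by
  have key := one_le_sqrt_sub_sqrt_sub_one_mul_two_mul_sqrt hx
  calc (1 - 1 / √2) / 2 ≤ (√x - √(x - 1)) * (2 * √x) * ((1 - 1 / √2) / 2) :=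
        le_mul_of_one_le_left (by linarith [one_sub_inv_sqrt_two_nonneg]) key
    _ = (√x - √(x - 1)) * (√x - √x / √2) := by ring

lemma sqrt_two_pow_pred {l : ℕ} (hl : 1 ≤ l) : √((2 : ℝ) ^ (l - 1)) = √(2 ^ l) / √2 := by
  obtain ⟨k, rfl⟩ := Nat.exists_eq_add_of_le' hl
  rw [Nat.add_sub_cancel, pow_succ, sqrt_mul (by positivity), mul_div_cancel_right₀ _ (by positivity)]

/-- **Asymptotic tightness of the sparsified-threshold bound.**
With the ordered-norm weights `w_ℓ = √ℓ − √(ℓ−1)`, the telescoped sum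
`w₁ + Σ_{l=1}^{t} w_{2^l}·(√(2^l) − √(2^{l−1}))` is at least `(1 − 1/√2)·(t+1)/2`,
hence `Ω(log r)` for `r = 2^t`. -/
theorem sparsified_threshold_tight (t : ℕ) :
    (1 - 1 / Real.sqrt 2) * (t + 1) / 2 ≤
      (Real.sqrt 1 - Real.sqrt ((1 : ℝ) - 1)) +
        ∑ l ∈ Finset.Icc 1 t,
          (Real.sqrt ((2 : ℝ) ^ l) - Real.sqrt ((2 : ℝ) ^ l - 1)) *
            (Real.sqrt ((2 : ℝ) ^ l) - Real.sqrt ((2 : ℝ) ^ (l - 1))) := by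
  have hc := one_sub_inv_sqrt_two_nonneg
  calc (1 - 1 / √2) * (t + 1) / 2 = (1 - 1 / √2) / 2 + ∑ _l ∈ Icc 1 t, (1 - 1 / √2) / 2 := by
        simp only [sum_const, Nat.card_Icc, add_tsub_cancel_right, nsmul_eq_mul]
        ring
    _ ≤ _ := by
      gcongr with l hl
      · simp only [sqrt_one, sub_self, sqrt_zero, sub_zero]
        linarith [show 0 ≤ 1 / √2 by positivity]
      · rw [sqrt_two_pow_pred (mem_Icc.mp hl).1]
        exact one_sub_inv_sqrt_two_div_two_le_mul (one_le_pow₀ one_le_two)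
end

section
/- Let q ≥ 1 be a real number, R ≥ 0, and ℓ ≥ 1 an integer. For t = 1,…,ℓ let J_t be nonempty finite pairwise disjoint sets, let v assign to each element of ⋃_t J_t a value in [0, R], and let x assign to each element a nonnegative weight with Σ_{j ∈ J_t} x_j = 1 for every t. Suppose that for every 1 ≤ t < ℓ and every j' ∈ J_{t+1}, one has v_{j'} ≥ v_j for all j ∈ J_t (the groups are sorted: every value in a group is at least every value in the previous group). Then Σ_{t=1}^{ℓ} (max_{j ∈ J_t} v_j)^q ≤ R^q + Σ_{t=1}^{ℓ} Σ_{j ∈ J_t} x_j·v_j^q. -/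
/-!
Each group carries one unit of weight, and every value in group `t + 1` is at least the maximum
of group `t`; so the `q`-th power of the maximum of group `t` is at most the weighted average of
the `q`-th powers over group `t + 1`. Summing over `t < ℓ` and bounding the maximum of the last
group by `R` gives the inequality.
-/

open Finset

namespace Real

variable {ι : Type*} {s : Set ι} {f : ι → ℝ}

-- The inner supremum over `i ∉ s` is `sSup ∅ = 0` in `ℝ`, hence the sign conditions.
lemma biSup_le {a : ℝ} (hf : ∀ i ∈ s, f i ≤ a) (ha : 0 ≤ a) : ⨆ i ∈ s, f i ≤ a :=
  Real.iSup_le (fun i => Real.iSup_le (hf i) ha) ha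

lemma biSup_nonneg (hf : ∀ i ∈ s, 0 ≤ f i) : 0 ≤ ⨆ i ∈ s, f i :=
  Real.iSup_nonneg fun i => Real.iSup_nonneg (hf i)

end Real

lemma le_sum_mul_of_sum_eq_one {ι : Type*} {s : Finset ι} {x f : ι → ℝ} {m : ℝ}
    (hx0 : ∀ j ∈ s, 0 ≤ x j) (hx1 : ∑ j ∈ s, x j = 1) (hm : ∀ j ∈ s, m ≤ f j) :
    m ≤ ∑ j ∈ s, x j * f j :=
  calc m = ∑ j ∈ s, x j * m := by rw [← sum_mul, hx1, one_mul]
    _ ≤ ∑ j ∈ s, x j * f j := sum_le_sum fun j hj => mul_le_mul_of_nonneg_left (hm j hj) (hx0 j hj)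

section Chaining

variable {α : Type*} [AddCommMonoid α] [PartialOrder α] [IsOrderedAddMonoid α] {a b : ℕ → α}

lemma sum_Icc_le_sum_Icc_succ_of_le_succ {m : ℕ} (hab : ∀ t, 1 ≤ t → t ≤ m → a t ≤ b (t + 1))
    (hb : 0 ≤ b 1) : ∑ t ∈ Icc 1 m, a t ≤ ∑ t ∈ Icc 1 (m + 1), b t := by
  induction m with
  | zero => simpa using hb
  | succ m ih =>
    rw [sum_Icc_succ_top (by omega), sum_Icc_succ_top (by omega) b]
    exact add_le_add (ih fun t h1 h2 => hab t h1 (by omega)) (hab (m + 1) (by omega) le_rfl)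

lemma sum_Icc_le_add_sum_Icc_of_le_succ {n : ℕ} {c : α} (hn : 1 ≤ n)
    (hab : ∀ t, 1 ≤ t → t < n → a t ≤ b (t + 1)) (hc : a n ≤ c) (hb : 0 ≤ b 1) :
    ∑ t ∈ Icc 1 n, a t ≤ c + ∑ t ∈ Icc 1 n, b t := by
  obtain ⟨m, rfl⟩ := Nat.exists_eq_add_of_le' hn
  rw [sum_Icc_succ_top (by omega), add_comm c]
  exact add_le_add (sum_Icc_le_sum_Icc_succ_of_le_succ (fun t h1 h2 => hab t h1 (by omega)) hb) hc

end Chaining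

theorem chaining_topq_inequality_general
    {ι : Type} (q : ℝ) (hq : 1 ≤ q) (R : ℝ) (hR : 0 ≤ R)
    (ℓ : ℕ) (hℓ : 1 ≤ ℓ)
    (J : ℕ → Finset ι)
    (v : ι → ℝ)
    (hv : ∀ t ∈ Finset.Icc 1 ℓ, ∀ j ∈ J t, v j ∈ Set.Icc (0 : ℝ) R)
    (x : ι → ℝ) (hx0 : ∀ j, 0 ≤ x j)
    (hx1 : ∀ t ∈ Finset.Icc 1 ℓ, ∑ j ∈ J t, x j = 1)
    (hsorted : ∀ t, 1 ≤ t → t < ℓ → ∀ j' ∈ J (t + 1), ∀ j ∈ J t, v j ≤ v j') :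
    ∑ t ∈ Finset.Icc 1 ℓ, (⨆ j ∈ (J t : Set ι), v j) ^ q ≤
      R ^ q + ∑ t ∈ Finset.Icc 1 ℓ, ∑ j ∈ J t, x j * v j ^ q := by
  have hq0 : 0 ≤ q := zero_le_one.trans hq
  have hmax_nonneg : ∀ t ∈ Icc 1 ℓ, 0 ≤ ⨆ j ∈ (J t : Set ι), v j := fun t ht =>
    Real.biSup_nonneg fun j hj => (hv t ht j hj).1
  have hℓ_mem : ℓ ∈ Icc 1 ℓ := mem_Icc.2 ⟨hℓ, le_rfl⟩
  refine sum_Icc_le_add_sum_Icc_of_le_succ hℓ (fun t h1 h2 => ?_) ?_ ?_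
  · have ht : t ∈ Icc 1 ℓ := mem_Icc.2 ⟨h1, h2.le⟩
    have ht' : t + 1 ∈ Icc 1 ℓ := mem_Icc.2 ⟨by omega, h2⟩
    refine le_sum_mul_of_sum_eq_one (fun j _ => hx0 j) (hx1 (t + 1) ht') fun j' hj' => ?_
    exact Real.rpow_le_rpow (hmax_nonneg t ht)
      (Real.biSup_le (hsorted t h1 h2 j' hj') (hv (t + 1) ht' j' hj').1) hq0
  · exact Real.rpow_le_rpow (hmax_nonneg ℓ hℓ_mem)
      (Real.biSup_le (fun j hj => (hv ℓ hℓ_mem j hj).2) hR) hq0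
  · have h1 : 1 ∈ Icc 1 ℓ := mem_Icc.2 ⟨le_rfl, hℓ⟩
    exact sum_nonneg fun j hj => mul_nonneg (hx0 j) (Real.rpow_nonneg (hv 1 h1 j hj).1 q)

/-- **The chaining inequality for bounding Top_ℓ^{(q)} norms of rounded solutions.**
If `J_1, …, J_ℓ` are nonempty pairwise disjoint finite groups, each carrying one unit of
fractional weight `x`, with values `v ∈ [0,R]`, sorted so that every value in a group is at
least every value in the previous one, then the sum of `q`-th powers of the group maxima is
at most `R^q` plus the total weighted sum of `q`-th powers. -/
theorem chaining_topq_inequality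
    {ι : Type} (q : ℝ) (hq : 1 ≤ q) (R : ℝ) (hR : 0 ≤ R)
    (ℓ : ℕ) (hℓ : 1 ≤ ℓ)
    (J : ℕ → Finset ι)
    (hne : ∀ t ∈ Finset.Icc 1 ℓ, (J t).Nonempty)
    (hdisj : ∀ s ∈ Finset.Icc 1 ℓ, ∀ t ∈ Finset.Icc 1 ℓ, s ≠ t → Disjoint (J s) (J t))
    (v : ι → ℝ)
    (hv : ∀ t ∈ Finset.Icc 1 ℓ, ∀ j ∈ J t, v j ∈ Set.Icc (0 : ℝ) R)
    (x : ι → ℝ) (hx0 : ∀ j, 0 ≤ x j)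
    (hx1 : ∀ t ∈ Finset.Icc 1 ℓ, ∑ j ∈ J t, x j = 1)
    (hsorted : ∀ t, 1 ≤ t → t < ℓ → ∀ j' ∈ J (t + 1), ∀ j ∈ J t, v j ≤ v j') :
    ∑ t ∈ Finset.Icc 1 ℓ, (⨆ j ∈ (J t : Set ι), v j) ^ q ≤
      R ^ q + ∑ t ∈ Finset.Icc 1 ℓ, ∑ j ∈ J t, x j * v j ^ q :=
  chaining_topq_inequality_general q hq R hR ℓ hℓ J v hv x hx0 hx1 hsorted
end

section
/- Let J be a finite set, M ≥ 1 an integer, F a finite set of functions σ : J → {1,…,M}, and e ∈ ℝ^M. Then the set Q = {(α, μ) ∈ ℝ≥0^M × ℝ : Σ_{i=1}^{M} α_i·e_i ≤ μ − 1, and Σ_{i=1}^{M} α_i·|σ^{-1}(i)| ≥ μ for every σ ∈ F} is empty if and only if there exists λ : F → ℝ≥0 with Σ_{σ ∈ F} λ_σ = 1 and Σ_{σ ∈ F} λ_σ·|σ^{-1}(i)| ≤ e_i for every i ∈ {1,…,M}. -/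
/-!
Weak duality gives one direction. Conversely, if no distribution exists, the compact convex set of
averages of the vectors `c σ` is disjoint from the closed orthant `{x | x ≤ e}`. A functional
separating them is bounded above on that orthant, hence has nonnegative coefficients `α`, and
rescaling `(α, μ)` by the separation gap gives a point of `Q`.
-/

open Finset

section Farkas

variable {ι κ 𝕜 : Type*} [Fintype κ] [Field 𝕜] [LinearOrder 𝕜] [IsStrictOrderedRing 𝕜]

theorem LinearMap.apply_eq_dotProduct {R : Type*} [CommSemiring R] [DecidableEq κ]
    (f : (κ → R) →ₗ[R] R) (x : κ → R) :
    f x = (fun i => f (Pi.single i 1)) ⬝ᵥ x := by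
  rw [f.pi_apply_eq_sum_univ x, dotProduct]
  refine sum_congr rfl fun i _ => ?_
  rw [smul_eq_mul, mul_comm]
  congr 2 with j
  simp [Pi.single_apply, eq_comm]

theorem nonneg_of_forall_le_dotProduct_lt {α e : κ → 𝕜} {b : 𝕜} (h : ∀ x ≤ e, α ⬝ᵥ x < b) :
    0 ≤ α := by
  classical
  intro i
  by_contra! hi
  rw [Pi.zero_apply] at hi
  set t : 𝕜 := (b - α ⬝ᵥ e) / -α i
  have hb : α ⬝ᵥ e < b := h e le_rfl
  have ht : 0 ≤ t := div_nonneg (by linarith) (by linarith)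
  have hx : e - t • Pi.single i 1 ≤ e :=
    sub_le_self _ (smul_nonneg ht (Pi.single_nonneg.2 zero_le_one))
  have : α ⬝ᵥ (e - t • Pi.single i 1) = b := by
    rw [dotProduct_sub, dotProduct_smul, dotProduct_single, smul_eq_mul, mul_one]
    have hne : α i ≠ 0 := hi.ne
    simp only [t]
    field_simp
    ring
  linarith [h _ hx]

theorem le_dotProduct_of_sum_smul_le {s : Finset ι} {c : ι → κ → 𝕜} {e : κ → 𝕜} {lam : ι → 𝕜}
    {α : κ → 𝕜} {μ : 𝕜}
    (hlam : ∀ σ ∈ s, 0 ≤ lam σ) (hsum : ∑ σ ∈ s, lam σ = 1) (hle : ∑ σ ∈ s, lam σ • c σ ≤ e)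
    (hα : 0 ≤ α) (hμ : ∀ σ ∈ s, μ ≤ α ⬝ᵥ c σ) : μ ≤ α ⬝ᵥ e :=
  calc μ = ∑ σ ∈ s, lam σ * μ := by rw [← sum_mul, hsum, one_mul]
    _ ≤ ∑ σ ∈ s, lam σ * (α ⬝ᵥ c σ) :=
      sum_le_sum fun σ hσ => mul_le_mul_of_nonneg_left (hμ σ hσ) (hlam σ hσ)
    _ = α ⬝ᵥ ∑ σ ∈ s, lam σ • c σ := by simp only [dotProduct_sum, dotProduct_smul, smul_eq_mul]
    _ ≤ α ⬝ᵥ e := dotProduct_le_dotProduct_of_nonneg_left hle hα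

theorem exists_dotProduct_separation_of_forall_not_sum_smul_le (s : Finset ι) (c : ι → κ → ℝ)
    (e : κ → ℝ)
    (h : ∀ lam : ι → ℝ, 0 ≤ lam → ∑ σ ∈ s, lam σ = 1 → ¬ ∑ σ ∈ s, lam σ • c σ ≤ e) :
    ∃ α : κ → ℝ, 0 ≤ α ∧ ∃ μ, α ⬝ᵥ e < μ ∧ ∀ σ ∈ s, μ ≤ α ⬝ᵥ c σ := by
  classical
  set T := Fintype.linearCombination ℝ (fun σ : s => c σ) '' stdSimplex ℝ s
  have hdisj : Disjoint (Set.Iic e) T := by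
    rw [Set.disjoint_right]
    rintro _ ⟨w, hw, rfl⟩ hle
    refine h (fun σ => if hσ : σ ∈ s then w ⟨σ, hσ⟩ else 0)
      (fun σ => dite_nonneg (fun _ => hw.1 _) fun _ => le_rfl) ?_ ?_ <;> rw [← sum_coe_sort]
    · simpa using hw.2
    · simpa [Fintype.linearCombination_apply] using hle
  obtain ⟨f, u, v, hfe, huv, hfT⟩ := geometric_hahn_banach_closed_compact (convex_Iic e)
    isClosed_Iic ((convex_stdSimplex ℝ s).linear_image _)
    ((isCompact_stdSimplex ℝ s).image (LinearMap.continuous_of_finiteDimensional _)) hdisj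
  set α : κ → ℝ := fun i => f (Pi.single i 1)
  have hf : ∀ x, f x = α ⬝ᵥ x := (f : (κ → ℝ) →ₗ[ℝ] ℝ).apply_eq_dotProduct
  refine ⟨α, nonneg_of_forall_le_dotProduct_lt fun x hx => hf x ▸ hfe x hx, v,
    (hf e ▸ hfe e (Set.mem_Iic.2 le_rfl)).trans huv, fun σ hσ => ?_⟩
  have hσT : c σ ∈ T := ⟨Pi.single ⟨σ, hσ⟩ 1, single_mem_stdSimplex ℝ _, by simp⟩
  exact hf (c σ) ▸ (hfT _ hσT).le

theorem exists_distribution_sum_smul_le_iff (s : Finset ι) (c : ι → κ → ℝ) (e : κ → ℝ) :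
    (∃ lam : ι → ℝ, 0 ≤ lam ∧ ∑ σ ∈ s, lam σ = 1 ∧ ∑ σ ∈ s, lam σ • c σ ≤ e) ↔
      ¬ ∃ (α : κ → ℝ) (μ : ℝ), 0 ≤ α ∧ α ⬝ᵥ e ≤ μ - 1 ∧ ∀ σ ∈ s, μ ≤ α ⬝ᵥ c σ := by
  constructor
  · rintro ⟨lam, hlam, hsum, hle⟩ ⟨α, μ, hα, hαe, hμ⟩
    linarith [le_dotProduct_of_sum_smul_le (fun σ _ => hlam σ) hsum hle hα hμ]
  · intro hQ
    by_contra! hP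
    obtain ⟨α, hα, μ, hαe, hμ⟩ := exists_dotProduct_separation_of_forall_not_sum_smul_le s c e hP
    have hd : 0 < μ - α ⬝ᵥ e := sub_pos.2 hαe
    have hd' : 0 ≤ (μ - α ⬝ᵥ e)⁻¹ := inv_nonneg.2 hd.le
    refine hQ ⟨(μ - α ⬝ᵥ e)⁻¹ • α, (μ - α ⬝ᵥ e)⁻¹ * μ, smul_nonneg hd' hα, ?_, fun σ hσ => ?_⟩
    · rw [smul_dotProduct, smul_eq_mul]
      field_simp
      linarith
    · rw [smul_dotProduct, smul_eq_mul]
      exact mul_le_mul_of_nonneg_left (hμ σ hσ) hd'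

end Farkas

theorem fair_makespan_farkas_general
    (J : Type) [Fintype J] (M : ℕ)
    (F : Finset (J → Fin M)) (e : Fin M → ℝ) :
    (¬ ∃ (α : Fin M → ℝ) (μ : ℝ),
        (∀ i, 0 ≤ α i) ∧
        (∑ i, α i * e i ≤ μ - 1) ∧
        (∀ σ ∈ F, μ ≤ ∑ i, α i * ((Finset.univ.filter (fun j => σ j = i)).card : ℝ))) ↔
    ∃ lam : (J → Fin M) → ℝ,
      (∀ σ, 0 ≤ lam σ) ∧
      (∑ σ ∈ F, lam σ = 1) ∧
      (∀ i, ∑ σ ∈ F, lam σ * ((Finset.univ.filter (fun j => σ j = i)).card : ℝ) ≤ e i) := by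
  refine (exists_distribution_sum_smul_le_iff F
    (fun σ i => ((univ.filter fun j => σ j = i).card : ℝ)) e).symm.trans ?_
  simp only [Pi.le_def, Finset.sum_apply, Pi.smul_apply, smul_eq_mul, Pi.zero_apply]

/-- **LP-duality / Farkas statement for Fair Max-Norm Makespan.**
The polytope `Q_l(B)` (on dual variables `(α, μ)`) is empty if and only if the primal
program `Pl_l(B)` is feasible, i.e. there is a distribution `λ` over the finite collection
`F` of assignments whose expected job count on each machine `i` is at most `e_i`. -/
theorem fair_makespan_farkas
    (J : Type) [Fintype J] (M : ℕ) (hM : 1 ≤ M)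
    (F : Finset (J → Fin M)) (e : Fin M → ℝ) :
    (¬ ∃ (α : Fin M → ℝ) (μ : ℝ),
        (∀ i, 0 ≤ α i) ∧
        (∑ i, α i * e i ≤ μ - 1) ∧
        (∀ σ ∈ F, μ ≤ ∑ i, α i * ((Finset.univ.filter (fun j => σ j = i)).card : ℝ))) ↔
    ∃ lam : (J → Fin M) → ℝ,
      (∀ σ, 0 ≤ lam σ) ∧
      (∑ σ ∈ F, lam σ = 1) ∧
      (∀ i, ∑ σ ∈ F, lam σ * ((Finset.univ.filter (fun j => σ j = i)).card : ℝ) ≤ e i) :=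
  fair_makespan_farkas_general J M F e
end

section
/- Let E be a finite set, 𝓛 a laminar family of subsets of E, and M a matroid on ground set E with rank function r. Let 𝓛₁, 𝓛₂ ⊆ 𝓛 and let b₁ : 𝓛₁ → ℤ and b₂ : 𝓛₂ → ℤ. Define the polytope P = {x ∈ ℝ^E : x_e ≥ 0 for all e ∈ E; Σ_{e ∈ L} x_e ≤ b₁(L) for all L ∈ 𝓛₁; Σ_{e ∈ L} x_e ≥ b₂(L) for all L ∈ 𝓛₂; Σ_{e ∈ S} x_e ≤ r(S) for all S ⊆ E}. Then P is either empty or every extreme point of P is integral (all its coordinates are integers). -/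
/-!
Let `x` be an extreme point. By submodularity the sets `S` with `x(S) = r(S)` are closed under
`∪` and `∩`, so a maximal chain `𝓒` among them spans all of them (uncrossing). A vector `d` whose
sums vanish on `𝓒`, on the sets of `𝓛` on which `x` has an integral sum and on the singletons
where `x` is integral is orthogonal to every tight constraint, so `x ± ε d` stays in the polytope
and `d = 0`. Hence every unit vector is a real combination of indicator vectors of two laminar
families on which `x` has integral sums. Rounding the partial sums of the coefficients along
chains (down for one family, up for the other) makes the combination integral, which exhibits
`x e` as an integer combination of integers.
-/

open Finset Filter Topology

def IsLaminar {α : Type*} (𝓐 : Set (Finset α)) : Prop :=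
  ∀ A ∈ 𝓐, ∀ B ∈ 𝓐, A ⊆ B ∨ B ⊆ A ∨ Disjoint A B

section Laminar

variable {α : Type*}

lemma IsLaminar.mono {𝓐 𝓑 : Set (Finset α)} (h : IsLaminar 𝓐) (h𝓑 : 𝓑 ⊆ 𝓐) : IsLaminar 𝓑 :=
  fun A hA B hB => h A (h𝓑 hA) B (h𝓑 hB)

lemma IsChain.isLaminar {𝓒 : Set (Finset α)} (h : IsChain (· ≤ ·) 𝓒) : IsLaminar 𝓒 :=
  fun _ hA _ hB => (h.total hA hB).imp_right Or.inl

lemma IsLaminar.union_range_singleton {𝓐 : Set (Finset α)} (h : IsLaminar 𝓐) :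
    IsLaminar (𝓐 ∪ Set.range singleton) := by
  have key : ∀ (a : α) (A : Finset α), {a} ⊆ A ∨ Disjoint {a} A := fun a A => by
    by_cases ha : a ∈ A
    · exact Or.inl (singleton_subset_iff.2 ha)
    · exact Or.inr (disjoint_singleton_left.2 ha)
  rintro A (hA | ⟨a, rfl⟩) B (hB | ⟨b, rfl⟩)
  · exact h A hA B hB
  · exact (key b A).elim (fun h => Or.inr (Or.inl h)) (fun h => Or.inr (Or.inr h.symm))
  · exact (key a B).imp_right Or.inr
  · exact (key a {b}).imp_right Or.inr

lemma IsLaminar.isChain_filter_mem [DecidableEq α] {𝓐 : Finset (Finset α)}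
    (h : IsLaminar (𝓐 : Set (Finset α))) (a : α) :
    IsChain (· ≤ ·) (({A ∈ 𝓐 | a ∈ A} : Finset (Finset α)) : Set (Finset α)) := by
  intro A hA B hB _
  rw [coe_filter] at hA hB
  exact (h A hA.1 B hB.1).imp_right
    (Or.resolve_right · (not_disjoint_iff.2 ⟨a, hA.2, hB.2⟩))

end Laminar

section Telescope

variable {α R M : Type*} [PartialOrder α] [AddCommMonoid R] [AddCommGroup M]

def telescopeWeight [DecidableLE α] [DecidableLT α] (g : R → M) (s : Finset α) (w : α → R)
    (a : α) : M :=
  g (∑ b ∈ s with a ≤ b, w b) - g (∑ b ∈ s with a < b, w b)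

lemma IsChain.sum_telescopeWeight [DecidableLE α] [DecidableLT α] {s : Finset α}
    (hs : IsChain (· ≤ ·) (s : Set α)) (g : R → M) (w : α → R) :
    ∑ a ∈ s, telescopeWeight g s w a = g (∑ a ∈ s, w a) - g 0 := by
  classical
  induction s using Finset.strongInduction with
  | H s ih =>
  rcases s.eq_empty_or_nonempty with rfl | hne
  · simp
  obtain ⟨m, hm⟩ := s.exists_minimal hne
  have hm_le : ∀ a ∈ s, m ≤ a := fun a ha =>
    (hs.total hm.1 ha).elim id fun h => hm.2 ha h
  have herase : ∀ a ∈ s.erase m,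
      telescopeWeight g s w a = telescopeWeight g (s.erase m) w a := by
    intro a ha
    have hma : m < a := lt_of_le_of_ne (hm_le a (mem_of_mem_erase ha)) (ne_of_mem_erase ha).symm
    unfold telescopeWeight
    congr 2 <;> rw [filter_erase, erase_eq_of_notMem] <;>
      simp [mem_filter, hma.not_ge, hma.not_gt]
  have hle : ∑ b ∈ s with m ≤ b, w b = ∑ b ∈ s, w b := by
    rw [filter_true_of_mem hm_le]
  have hlt : ∑ b ∈ s with m < b, w b = ∑ b ∈ s.erase m, w b := by
    congr 1
    ext a
    simp only [mem_filter, mem_erase]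
    exact ⟨fun h => ⟨h.2.ne', h.1⟩, fun h => ⟨h.2, lt_of_le_of_ne (hm_le a h.2) h.1.symm⟩⟩
  rw [← add_sum_erase s _ hm.1, sum_congr rfl herase,
    ih _ (erase_ssubset hm.1) (hs.mono (by simp)), telescopeWeight, hle, hlt]
  abel

end Telescope

section IntegerWeights

variable {α : Type*} [DecidableEq α]

lemma IsLaminar.sum_telescopeWeight_filter_mem {R M : Type*} [AddCommMonoid R] [AddCommGroup M]
    {𝓐 : Finset (Finset α)} (h : IsLaminar (𝓐 : Set (Finset α))) (g : R → M)
    (w : Finset α → R) (a : α) :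
    ∑ A ∈ 𝓐 with a ∈ A, telescopeWeight g 𝓐 w A = g (∑ A ∈ 𝓐 with a ∈ A, w A) - g 0 := by
  rw [← (h.isChain_filter_mem a).sum_telescopeWeight]
  refine sum_congr rfl fun A hA => ?_
  have haA := (mem_filter.1 hA).2
  unfold telescopeWeight
  rw [filter_filter, filter_filter]
  congr 2 <;> refine sum_congr (filter_congr fun B _ => ?_) fun _ _ => rfl
  · exact ⟨fun hAB => ⟨hAB haA, hAB⟩, And.right⟩
  · exact ⟨fun hAB => ⟨hAB.le haA, hAB⟩, And.right⟩

lemma exists_int_weights_of_isLaminar {𝓐 𝓑 : Finset (Finset α)}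
    (h𝓐 : IsLaminar (𝓐 : Set (Finset α))) (h𝓑 : IsLaminar (𝓑 : Set (Finset α)))
    (u v : Finset α → ℝ) (c : α → ℤ)
    (h : ∀ a, ∑ A ∈ 𝓐 with a ∈ A, u A + ∑ B ∈ 𝓑 with a ∈ B, v B = c a) :
    ∃ u' v' : Finset α → ℤ, ∀ a, ∑ A ∈ 𝓐 with a ∈ A, u' A + ∑ B ∈ 𝓑 with a ∈ B, v' B = c a := by
  -- `⌊s⌋ + ⌈c - s⌉ = c` because `c` is an integer.
  refine ⟨telescopeWeight Int.floor 𝓐 u, telescopeWeight Int.ceil 𝓑 v, fun a => ?_⟩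
  rw [h𝓐.sum_telescopeWeight_filter_mem, h𝓑.sum_telescopeWeight_filter_mem,
    eq_sub_of_add_eq' (h a), Int.floor_zero, Int.ceil_zero, sub_zero, sub_zero, sub_eq_neg_add,
    Int.ceil_add_intCast, Int.ceil_neg]
  ring

end IntegerWeights

section Span

variable {E : Type*} [DecidableEq E]

def indicatorVec (S : Finset E) : E → ℝ := fun e => if e ∈ S then 1 else 0

lemma exists_weights_of_mem_span_indicatorVec {𝒮 : Finset (Finset E)} {v : E → ℝ}
    (h : v ∈ Submodule.span ℝ (indicatorVec '' 𝒮)) :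
    ∃ u : Finset E → ℝ, ∀ e, ∑ S ∈ 𝒮 with e ∈ S, u S = v e := by
  obtain ⟨u, rfl⟩ := (Submodule.mem_span_image_finset_iff_exists_fun' ℝ).1 h
  refine ⟨u, fun e => ?_⟩
  simp [sum_filter, indicatorVec]

variable [Fintype E]

lemma mem_bot_of_indicatorVec_mem_span {𝓐 𝓑 : Finset (Finset E)}
    (h𝓐 : IsLaminar (𝓐 : Set (Finset E))) (h𝓑 : IsLaminar (𝓑 : Set (Finset E))) {x : E → ℝ}
    (hx : ∀ S ∈ 𝓐 ∪ 𝓑, ∑ e ∈ S, x e ∈ (⊥ : Subring ℝ)) {e₀ : E}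
    (h : indicatorVec {e₀} ∈ Submodule.span ℝ (indicatorVec '' ↑(𝓐 ∪ 𝓑))) :
    x e₀ ∈ (⊥ : Subring ℝ) := by
  rw [coe_union, Set.image_union, Submodule.span_union, Submodule.mem_sup] at h
  obtain ⟨y, hy, z, hz, hyz⟩ := h
  obtain ⟨u, hu⟩ := exists_weights_of_mem_span_indicatorVec hy
  obtain ⟨v, hv⟩ := exists_weights_of_mem_span_indicatorVec hz
  obtain ⟨u', v', huv⟩ := exists_int_weights_of_isLaminar h𝓐 h𝓑 u v
    (fun e => if e = e₀ then 1 else 0) fun e => by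
      rw [hu, hv, ← Pi.add_apply, hyz]
      simp [indicatorVec]
  have hswap : ∀ (𝓐 : Finset (Finset E)) (w : Finset E → ℤ),
      ∑ e, (∑ A ∈ 𝓐 with e ∈ A, (w A : ℝ)) * x e = ∑ A ∈ 𝓐, (w A : ℝ) * ∑ e ∈ A, x e := by
    intro 𝓐 w
    simp_rw [sum_mul, mul_sum]
    exact sum_comm' fun e A => by simp [and_comm]
  have hx₀ : x e₀ =
      ∑ A ∈ 𝓐, (u' A : ℝ) * ∑ e ∈ A, x e + ∑ B ∈ 𝓑, (v' B : ℝ) * ∑ e ∈ B, x e := by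
    calc x e₀ = ∑ e, ((if e = e₀ then 1 else 0 : ℤ) : ℝ) * x e := by simp
      _ = _ := by simp_rw [← huv, Int.cast_add, Int.cast_sum, add_mul, sum_add_distrib, hswap]
  rw [hx₀]
  refine add_mem (sum_mem fun A hA => mul_mem (intCast_mem _ _) (hx A (mem_union_left _ hA)))
    (sum_mem fun B hB => mul_mem (intCast_mem _ _) (hx B (mem_union_right _ hB)))

lemma exists_sum_ne_zero_of_indicatorVec_notMem_span {𝒮 : Set (Finset E)} {S₀ : Finset E}
    (h : indicatorVec S₀ ∉ Submodule.span ℝ (indicatorVec '' 𝒮)) :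
    ∃ d : E → ℝ, ∑ e ∈ S₀, d e ≠ 0 ∧ ∀ S ∈ 𝒮, ∑ e ∈ S, d e = 0 := by
  obtain ⟨f, hf₀, hf⟩ := Submodule.exists_dual_map_eq_bot_of_notMem h inferInstance
  have hf_indicator : ∀ S : Finset E, f (indicatorVec S) =
      ∑ e ∈ S, f fun j => if e = j then 1 else 0 := by
    intro S
    rw [LinearMap.pi_apply_eq_sum_univ]
    simp [indicatorVec, sum_ite_mem]
  refine ⟨_, (hf_indicator S₀) ▸ hf₀, fun S hS => (hf_indicator S) ▸ ?_⟩
  rw [← Submodule.mem_bot ℝ, ← hf]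
  exact Submodule.mem_map_of_mem (Submodule.subset_span ⟨S, hS, rfl⟩)

end Span

section MaximalChain

variable {α : Type*}

lemma Finset.exists_isChain_subset_maximal [LE α] (𝒢 : Finset α) :
    ∃ 𝓒 ⊆ 𝒢, IsChain (· ≤ ·) (𝓒 : Set α) ∧
      ∀ a ∈ 𝒢, (∀ c ∈ 𝓒, c ≤ a ∨ a ≤ c) → a ∈ 𝓒 := by
  classical
  set chains := 𝒢.powerset.filter fun 𝓒 : Finset α => IsChain (· ≤ ·) (𝓒 : Set α)
  obtain ⟨𝓒, h𝓒⟩ := chains.exists_maximal ⟨∅, by simp [chains]⟩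
  obtain ⟨h𝓒𝒢, hchain⟩ := mem_filter.1 h𝓒.1
  refine ⟨𝓒, mem_powerset.1 h𝓒𝒢, hchain, fun a ha hcomp => ?_⟩
  have hins : insert a 𝓒 ∈ chains := by
    refine mem_filter.2 ⟨mem_powerset.2 (insert_subset ha (mem_powerset.1 h𝓒𝒢)), ?_⟩
    rw [coe_insert]
    exact hchain.insert fun c hc _ => (hcomp c hc).symm
  exact h𝓒.2 hins (subset_insert a 𝓒) (mem_insert_self a 𝓒)

lemma eq_zero_of_isChain_maximal [Lattice α] {M : Type*} [AddCommGroup M] {f : α → M}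
    (hf : ∀ a b, f (a ⊔ b) + f (a ⊓ b) = f a + f b) {𝒢 𝓒 : Finset α}
    (h𝒢 : ∀ a ∈ 𝒢, ∀ b ∈ 𝒢, a ⊔ b ∈ 𝒢 ∧ a ⊓ b ∈ 𝒢) (h𝓒𝒢 : 𝓒 ⊆ 𝒢)
    (h𝓒 : IsChain (· ≤ ·) (𝓒 : Set α)) (hmax : ∀ a ∈ 𝒢, (∀ c ∈ 𝓒, c ≤ a ∨ a ≤ c) → a ∈ 𝓒)
    (hf𝓒 : ∀ c ∈ 𝓒, f c = 0) : ∀ a ∈ 𝒢, f a = 0 := by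
  classical
  intro a ha
  refine (𝒢.finite_toSet.wellFoundedOn (r := (· > ·))).induction (P := (f · = 0)) ha
    fun a ha ih => ?_
  by_cases ha𝓒 : a ∈ 𝓒
  · exact hf𝓒 a ha𝓒
  have hne : ({c ∈ 𝓒 | ¬ c ≤ a}).Nonempty := by
    by_contra hempty
    refine ha𝓒 (hmax a ha fun c hc => Or.inl ?_)
    by_contra hca
    exact hempty ⟨c, mem_filter.2 ⟨hc, hca⟩⟩
  obtain ⟨c, hc⟩ := Finset.exists_minimal hne
  obtain ⟨hc𝓒, hca⟩ := mem_filter.1 hc.1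
  have hinf : a ⊓ c ∈ 𝓒 := by
    refine hmax _ (h𝒢 a ha c (h𝓒𝒢 hc𝓒)).2 fun c' hc' => ?_
    rcases h𝓒.total hc𝓒 hc' with hcc' | hc'c
    · exact Or.inr (inf_le_right.trans hcc')
    · by_cases hc'a : c' ≤ a
      · exact Or.inl (le_inf hc'a hc'c)
      · exact Or.inr (inf_le_right.trans (hc.2 (mem_filter.2 ⟨hc', hc'a⟩) hc'c))
  have hsup : f (a ⊔ c) = 0 := ih _ (h𝒢 a ha c (h𝓒𝒢 hc𝓒)).1 (left_lt_sup.2 hca)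
  have hmod := hf a c
  rw [hsup, hf𝓒 _ hinf, hf𝓒 c hc𝓒] at hmod
  simpa using hmod.symm

end MaximalChain

section Polytope

lemma eq_zero_of_mem_extremePoints {V : Type*} [AddCommGroup V] [Module ℝ V] {A : Set V}
    {x d : V} (hx : x ∈ A.extremePoints ℝ) (hd : ∀ᶠ η in 𝓝 (0 : ℝ), x + η • d ∈ A) : d = 0 := by
  have hneg : ∀ᶠ η in 𝓝 (0 : ℝ), x - η • d ∈ A := by
    simpa [sub_eq_add_neg] using (continuous_neg.tendsto' 0 0 neg_zero).eventually hd
  obtain ⟨η, ⟨h₁, h₂⟩, hη⟩ :=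
    (((hd.and hneg).filter_mono nhdsWithin_le_nhds).and (self_mem_nhdsWithin (s := {0}ᶜ))).exists
  simpa [Set.mem_compl_singleton_iff.1 hη] using hx.2 h₁ h₂ (mem_openSegment_add_sub x (η • d))

lemma eventually_add_mul_le_add_mul {a b s t : ℝ} (h : a ≤ b) (hst : a = b → s = t) :
    ∀ᶠ η in 𝓝 (0 : ℝ), a + η * s ≤ b + η * t := by
  rcases h.lt_or_eq with h | rfl
  · have hcont : ∀ c u : ℝ, Tendsto (fun η => c + η * u) (𝓝 0) (𝓝 c) := fun c u =>
      (continuous_const.add (continuous_id.mul continuous_const)).tendsto' 0 c (by simp)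
    exact ((hcont a s).eventually_lt (hcont b t) h).mono fun _ => le_of_lt
  · simp [hst rfl]

lemma sum_union_eq_and_sum_inter_eq {E : Type*} [DecidableEq E] {r : Finset E → ℝ}
    (hr : ∀ S T, r (S ∪ T) + r (S ∩ T) ≤ r S + r T) {x : E → ℝ} (hx : ∀ S, ∑ e ∈ S, x e ≤ r S)
    {S T : Finset E} (hS : ∑ e ∈ S, x e = r S) (hT : ∑ e ∈ T, x e = r T) :
    ∑ e ∈ S ∪ T, x e = r (S ∪ T) ∧ ∑ e ∈ S ∩ T, x e = r (S ∩ T) := by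
  have hmod := sum_union_inter (s₁ := S) (s₂ := T) (f := x)
  have := hx (S ∪ T)
  have := hx (S ∩ T)
  have := hr S T
  constructor <;> linarith

variable {E : Type*}

def laminarMatroidPolytope (𝓛₁ 𝓛₂ : Set (Finset E)) (b₁ b₂ : Finset E → ℤ)
    (r : Finset E → ℕ) : Set (E → ℝ) :=
  {x | (∀ e, 0 ≤ x e) ∧
    (∀ L ∈ 𝓛₁, ∑ e ∈ L, x e ≤ (b₁ L : ℝ)) ∧
    (∀ L ∈ 𝓛₂, (b₂ L : ℝ) ≤ ∑ e ∈ L, x e) ∧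
    (∀ S : Finset E, ∑ e ∈ S, x e ≤ (r S : ℝ))}

lemma eventually_add_smul_mem_laminarMatroidPolytope [Finite E] {𝓛₁ 𝓛₂ : Set (Finset E)}
    {b₁ b₂ : Finset E → ℤ} {r : Finset E → ℕ} {x d : E → ℝ}
    (hx : x ∈ laminarMatroidPolytope 𝓛₁ 𝓛₂ b₁ b₂ r) (hd₀ : ∀ e, x e = 0 → d e = 0)
    (hd₁ : ∀ L ∈ 𝓛₁, ∑ e ∈ L, x e = b₁ L → ∑ e ∈ L, d e = 0)
    (hd₂ : ∀ L ∈ 𝓛₂, ∑ e ∈ L, x e = b₂ L → ∑ e ∈ L, d e = 0)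
    (hdr : ∀ S : Finset E, ∑ e ∈ S, x e = r S → ∑ e ∈ S, d e = 0) :
    ∀ᶠ η in 𝓝 (0 : ℝ), x + η • d ∈ laminarMatroidPolytope 𝓛₁ 𝓛₂ b₁ b₂ r := by
  obtain ⟨hx₀, hx₁, hx₂, hxr⟩ := hx
  have hsum : ∀ (η : ℝ) (S : Finset E),
      ∑ e ∈ S, (x + η • d) e = ∑ e ∈ S, x e + η * ∑ e ∈ S, d e := by
    simp [sum_add_distrib, mul_sum]
  have h₀ : ∀ᶠ η in 𝓝 (0 : ℝ), ∀ e, 0 ≤ (x + η • d) e := eventually_all.2 fun e =>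
    (eventually_add_mul_le_add_mul (hx₀ e) fun h => (hd₀ e h.symm).symm).mono
      fun η hη => by simpa using hη
  have h₁ : ∀ᶠ η in 𝓝 (0 : ℝ), ∀ L ∈ 𝓛₁, ∑ e ∈ L, (x + η • d) e ≤ b₁ L :=
    eventually_all.2 fun L => eventually_imp_distrib_left.2 fun hL =>
      (eventually_add_mul_le_add_mul (hx₁ L hL) (hd₁ L hL)).mono
        fun η hη => by rw [hsum]; simpa using hη
  have h₂ : ∀ᶠ η in 𝓝 (0 : ℝ), ∀ L ∈ 𝓛₂, (b₂ L : ℝ) ≤ ∑ e ∈ L, (x + η • d) e :=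
    eventually_all.2 fun L => eventually_imp_distrib_left.2 fun hL =>
      (eventually_add_mul_le_add_mul (hx₂ L hL) fun h => (hd₂ L hL h.symm).symm).mono
        fun η hη => by rw [hsum]; simpa using hη
  have hr : ∀ᶠ η in 𝓝 (0 : ℝ), ∀ S : Finset E, ∑ e ∈ S, (x + η • d) e ≤ r S :=
    eventually_all.2 fun S =>
      (eventually_add_mul_le_add_mul (hxr S) (hdr S)).mono
        fun η hη => by rw [hsum]; simpa using hη
  exact h₀.and (h₁.and (h₂.and hr))

variable [Fintype E]

open Classical in
noncomputable def tightSets (r : Finset E → ℕ) (x : E → ℝ) : Finset (Finset E) :=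
  {S | ∑ e ∈ S, x e = r S}

lemma mem_tightSets {r : Finset E → ℕ} {x : E → ℝ} {S : Finset E} :
    S ∈ tightSets r x ↔ ∑ e ∈ S, x e = r S := by
  simp [tightSets]

open Classical in
noncomputable def integralLaminarSets (𝓛 : Set (Finset E)) (x : E → ℝ) : Finset (Finset E) :=
  {S | S ∈ 𝓛 ∪ Set.range singleton ∧ ∑ e ∈ S, x e ∈ (⊥ : Subring ℝ)}

lemma mem_integralLaminarSets {𝓛 : Set (Finset E)} {x : E → ℝ} {S : Finset E} :
    S ∈ integralLaminarSets 𝓛 x ↔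
      S ∈ 𝓛 ∪ Set.range singleton ∧ ∑ e ∈ S, x e ∈ (⊥ : Subring ℝ) := by
  simp [integralLaminarSets]

variable [DecidableEq E]

lemma indicatorVec_mem_span_of_mem_extremePoints {𝓛 𝓛₁ 𝓛₂ : Set (Finset E)}
    (h𝓛₁ : 𝓛₁ ⊆ 𝓛) (h𝓛₂ : 𝓛₂ ⊆ 𝓛) {b₁ b₂ : Finset E → ℤ} {r : Finset E → ℕ}
    (hr : ∀ S T : Finset E, r (S ∪ T) + r (S ∩ T) ≤ r S + r T) {x : E → ℝ}
    (hx : x ∈ (laminarMatroidPolytope 𝓛₁ 𝓛₂ b₁ b₂ r).extremePoints ℝ) {𝓒 : Finset (Finset E)}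
    (h𝓒𝒯 : 𝓒 ⊆ tightSets r x) (h𝓒 : IsChain (· ≤ ·) (𝓒 : Set (Finset E)))
    (h𝓒max : ∀ S ∈ tightSets r x, (∀ C ∈ 𝓒, C ≤ S ∨ S ≤ C) → S ∈ 𝓒) (e₀ : E) :
    indicatorVec {e₀} ∈ Submodule.span ℝ (indicatorVec '' ↑(integralLaminarSets 𝓛 x ∪ 𝓒)) := by
  by_contra hspan
  obtain ⟨d, hd₀, hd⟩ := exists_sum_ne_zero_of_indicatorVec_notMem_span hspan
  have hd𝓣 : ∀ S ∈ 𝓛 ∪ Set.range singleton, ∑ e ∈ S, x e ∈ (⊥ : Subring ℝ) →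
      ∑ e ∈ S, d e = 0 := fun S hS hxS =>
    hd S (mem_union_left _ (mem_integralLaminarSets.2 ⟨hS, hxS⟩))
  have h𝒯 : ∀ S ∈ tightSets r x, ∀ T ∈ tightSets r x,
      S ⊔ T ∈ tightSets r x ∧ S ⊓ T ∈ tightSets r x := fun S hS T hT => by
    simpa [mem_tightSets] using sum_union_eq_and_sum_inter_eq (by exact_mod_cast hr)
      hx.1.2.2.2 (mem_tightSets.1 hS) (mem_tightSets.1 hT)
  have hd𝒯 := eq_zero_of_isChain_maximal (f := fun S => ∑ e ∈ S, d e)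
    (fun S T => sum_union_inter) h𝒯 h𝓒𝒯 h𝓒 h𝓒max fun C hC => hd C (mem_union_right _ hC)
  refine hd₀ ?_
  rw [eq_zero_of_mem_extremePoints hx (eventually_add_smul_mem_laminarMatroidPolytope hx.1
    (fun e hxe => by simpa using hd𝓣 {e} (Or.inr ⟨e, rfl⟩) (by simp [hxe]))
    (fun L hL hxL => hd𝓣 L (Or.inl (h𝓛₁ hL)) (hxL ▸ intCast_mem _ _))
    (fun L hL hxL => hd𝓣 L (Or.inl (h𝓛₂ hL)) (hxL ▸ intCast_mem _ _))
    (fun S hxS => hd𝒯 S (mem_tightSets.2 hxS)))]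
  simp

end Polytope

theorem laminar_matroid_polytope_integral_general
    (E : Type) [Fintype E] [DecidableEq E]
    (𝓛 : Set (Finset E))
    (hlaminar : ∀ A ∈ 𝓛, ∀ B ∈ 𝓛, A ⊆ B ∨ B ⊆ A ∨ Disjoint A B)
    (r : Finset E → ℕ)
    (hr_submod : ∀ S T : Finset E, r (S ∪ T) + r (S ∩ T) ≤ r S + r T)
    (𝓛₁ 𝓛₂ : Set (Finset E)) (h𝓛₁ : 𝓛₁ ⊆ 𝓛) (h𝓛₂ : 𝓛₂ ⊆ 𝓛)
    (b₁ b₂ : Finset E → ℤ)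
    (P : Set (E → ℝ))
    (hP : P = {x | (∀ e, 0 ≤ x e) ∧
        (∀ L ∈ 𝓛₁, ∑ e ∈ L, x e ≤ (b₁ L : ℝ)) ∧
        (∀ L ∈ 𝓛₂, (b₂ L : ℝ) ≤ ∑ e ∈ L, x e) ∧
        (∀ S : Finset E, ∑ e ∈ S, x e ≤ (r S : ℝ))}) :
    P = ∅ ∨ ∀ x ∈ P.extremePoints ℝ, ∀ e : E, ∃ z : ℤ, x e = (z : ℝ) := by
  subst hP
  refine Or.inr fun x hx e₀ => ?_
  obtain ⟨𝓒, h𝓒𝒯, h𝓒, h𝓒max⟩ := (tightSets r x).exists_isChain_subset_maximal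
  have h𝓣 : IsLaminar (integralLaminarSets 𝓛 x : Set (Finset E)) :=
    (IsLaminar.union_range_singleton hlaminar).mono fun S hS => (mem_integralLaminarSets.1 hS).1
  have hint : ∀ S ∈ integralLaminarSets 𝓛 x ∪ 𝓒, ∑ e ∈ S, x e ∈ (⊥ : Subring ℝ) := by
    intro S hS
    rcases mem_union.1 hS with hS | hS
    · exact (mem_integralLaminarSets.1 hS).2
    · exact (mem_tightSets.1 (h𝓒𝒯 hS)) ▸ intCast_mem _ _
  obtain ⟨n, hn⟩ := Subring.mem_bot.1 <| mem_bot_of_indicatorVec_mem_span h𝓣 h𝓒.isLaminar hint <|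
    indicatorVec_mem_span_of_mem_extremePoints h𝓛₁ h𝓛₂ hr_submod hx h𝓒𝒯 h𝓒 h𝓒max e₀
  exact ⟨n, hn.symm⟩

/-- **Integrality of the intersection of laminar constraints with a matroid polytope.**
Let `𝓛` be a laminar family on a finite ground set `E`, and let `r` be the rank function
of a matroid on `E` (normalized, monotone, submodular). Then the polytope `P` consisting of
nonnegative `x` with integer upper bounds `b₁` on sets of `𝓛₁ ⊆ 𝓛`, integer lower bounds
`b₂` on sets of `𝓛₂ ⊆ 𝓛`, and `x(S) ≤ r(S)` for all `S ⊆ E`, is either empty or has all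
its extreme points integral. -/
theorem laminar_matroid_polytope_integral
    (E : Type) [Fintype E] [DecidableEq E]
    (𝓛 : Set (Finset E))
    (hlaminar : ∀ A ∈ 𝓛, ∀ B ∈ 𝓛, A ⊆ B ∨ B ⊆ A ∨ Disjoint A B)
    (r : Finset E → ℕ)
    (hr_card : ∀ S, r S ≤ S.card)
    (hr_mono : ∀ S T : Finset E, S ⊆ T → r S ≤ r T)
    (hr_submod : ∀ S T : Finset E, r (S ∪ T) + r (S ∩ T) ≤ r S + r T)
    (𝓛₁ 𝓛₂ : Set (Finset E)) (h𝓛₁ : 𝓛₁ ⊆ 𝓛) (h𝓛₂ : 𝓛₂ ⊆ 𝓛)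
    (b₁ b₂ : Finset E → ℤ)
    (P : Set (E → ℝ))
    (hP : P = {x | (∀ e, 0 ≤ x e) ∧
        (∀ L ∈ 𝓛₁, ∑ e ∈ L, x e ≤ (b₁ L : ℝ)) ∧
        (∀ L ∈ 𝓛₂, (b₂ L : ℝ) ≤ ∑ e ∈ L, x e) ∧
        (∀ S : Finset E, ∑ e ∈ S, x e ≤ (r S : ℝ))}) :
    P = ∅ ∨ ∀ x ∈ P.extremePoints ℝ, ∀ e : E, ∃ z : ℤ, x e = (z : ℝ) :=
  laminar_matroid_polytope_integral_general E 𝓛 hlaminar r hr_submod 𝓛₁ 𝓛₂ h𝓛₁ h𝓛₂ b₁ b₂ P hP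
end
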